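/- arXiv:1508.07454 — 6 statements merged into one kernel-verified Lean document; each statement's English description precedes it below -/
import Mathlib

section
/- Let γ : I → ℝ³ be an adapted parameterization of a curve in a surface M (i.e., γ''' is tangent to M), with {γ', γ'', ξ} a frame satisfying det[γ'(t), γ''(t), ξ(t)] = 1 for all t, where ξ is tangent to M and transversal to γ. Then ξ'(t) is a scalar multiple of γ'(t) for every t; i.e., ξ is parallel. -/
lemma det3_hasDerivAt (f g h : ℝ → Fin 3 → ℝ) (f' g' h' : Fin 3 → ℝ) (t : ℝ)
    (hf : HasDerivAt f f' t) (hg : HasDerivAt g g' t) (hh : HasDerivAt h h' t) :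
    HasDerivAt (fun s => Matrix.det (Matrix.of ![f s, g s, h s]))
      (Matrix.det (Matrix.of ![f', g t, h t]) + Matrix.det (Matrix.of ![f t, g', h t])
        + Matrix.det (Matrix.of ![f t, g t, h'])) t := by
  have hf0 := hasDerivAt_pi.mp hf 0
  have hf1 := hasDerivAt_pi.mp hf 1
  have hf2 := hasDerivAt_pi.mp hf 2
  have hg0 := hasDerivAt_pi.mp hg 0
  have hg1 := hasDerivAt_pi.mp hg 1
  have hg2 := hasDerivAt_pi.mp hg 2
  have hh0 := hasDerivAt_pi.mp hh 0
  have hh1 := hasDerivAt_pi.mp hh 1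
  have hh2 := hasDerivAt_pi.mp hh 2
  have H := (((((((hf0.mul hg1).mul hh2).sub (((hf0.mul hg2).mul hh1))).sub
      (((hf1.mul hg0).mul hh2))).add (((hf1.mul hg2).mul hh0))).add
      (((hf2.mul hg0).mul hh1))).sub (((hf2.mul hg1).mul hh0)))
  have fun_eq : (fun s => Matrix.det (Matrix.of ![f s, g s, h s]))
      = fun s => f s 0 * g s 1 * h s 2 - f s 0 * g s 2 * h s 1 - f s 1 * g s 0 * h s 2
        + f s 1 * g s 2 * h s 0 + f s 2 * g s 0 * h s 1 - f s 2 * g s 1 * h s 0 := by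
    funext s
    simp [Matrix.det_fin_three]
  rw [fun_eq]
  convert H using 1
  · rfl
  · rfl
  · funext s
    simp only [Pi.mul_apply, Pi.sub_apply, Pi.add_apply]
  simp [Matrix.det_fin_three]
  ring



/-- For an adapted parameterization with `det[γ', γ'', ξ] = 1`, ξ tangent to M
(so γ''' and ξ' lie in the tangent plane `span{γ', ξ}` of M along γ),
the derivative ξ' is a multiple of γ': ξ is parallel. -/
theorem stmt_3 (γ ξ : ℝ → Fin 3 → ℝ)
    (hγ : ContDiff ℝ (⊤ : ℕ∞) γ) (hξ : ContDiff ℝ (⊤ : ℕ∞) ξ)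
    (hdet : ∀ t, Matrix.det (Matrix.of ![deriv γ t, iteratedDeriv 2 γ t, ξ t]) = 1)
    (hadapted : ∀ t, iteratedDeriv 3 γ t ∈ Submodule.span ℝ {deriv γ t, ξ t})
    (hξtan : ∀ t, deriv ξ t ∈ Submodule.span ℝ {deriv γ t, ξ t}) :
    ∀ t, ∃ c : ℝ, deriv ξ t = c • deriv γ t := by
  intro t
  obtain ⟨a, b, hab⟩ := Submodule.mem_span_pair.mp (hξtan t)
  obtain ⟨p, q, hpq⟩ := Submodule.mem_span_pair.mp (hadapted t)
  have hγ' : ContDiff ℝ (⊤:ℕ∞) γ := hγ.of_le (by simp)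
  have hξ' : ContDiff ℝ (⊤:ℕ∞) ξ := hξ.of_le (by simp)
  have h1 : ContDiff ℝ (⊤:ℕ∞) (deriv γ) := (contDiff_infty_iff_deriv.mp hγ').2
  have h2 : ContDiff ℝ (⊤:ℕ∞) (deriv (deriv γ)) := (contDiff_infty_iff_deriv.mp h1).2
  have e2 : iteratedDeriv 2 γ = deriv (deriv γ) := by
    rw [iteratedDeriv_succ, iteratedDeriv_one]
  have e3 : iteratedDeriv 3 γ = deriv (iteratedDeriv 2 γ) := by
    rw [iteratedDeriv_succ]
  have hdγ : HasDerivAt (deriv γ) (iteratedDeriv 2 γ t) t := by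
    rw [e2]; exact (h1.differentiable (by simp) t).hasDerivAt
  have hd2γ : HasDerivAt (iteratedDeriv 2 γ) (iteratedDeriv 3 γ t) t := by
    rw [e3, e2]; exact (h2.differentiable (by simp) t).hasDerivAt
  have hdξ : HasDerivAt ξ (deriv ξ t) t := (hξ'.differentiable (by simp) t).hasDerivAt
  have Hd := det3_hasDerivAt _ _ _ _ _ _ t hdγ hd2γ hdξ
  have Hc : HasDerivAt (fun s => Matrix.det (Matrix.of ![deriv γ s, iteratedDeriv 2 γ s, ξ s])) 0 t := by
    have : (fun s => Matrix.det (Matrix.of ![deriv γ s, iteratedDeriv 2 γ s, ξ s])) = fun _ => (1:ℝ) := by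
      funext s; exact hdet s
    rw [this]; exact hasDerivAt_const t 1
  have D0 := Hd.unique Hc
  have hξj : ∀ j, deriv ξ t j = a * deriv γ t j + b * ξ t j := by
    intro j; rw [← hab]; simp
  have hγ3j : ∀ j, iteratedDeriv 3 γ t j = p * deriv γ t j + q * ξ t j := by
    intro j; rw [← hpq]; simp
  have hd := hdet t
  refine ⟨a, ?_⟩
  have hb : b = 0 := by
    simp only [Matrix.det_fin_three, Matrix.of_apply, Matrix.cons_val', Matrix.cons_val_zero,
      Matrix.cons_val_one, Matrix.head_cons, Matrix.empty_val', Matrix.cons_val_fin_one,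
      Matrix.head_fin_const, Matrix.cons_val_two, Matrix.tail_cons] at D0 hd
    rw [hξj 0, hξj 1, hξj 2, hγ3j 0, hγ3j 1, hγ3j 2] at D0
    nlinarith [D0, hd]
  funext j
  rw [hξj j, hb]
  simp
end

section
/- With the Darboux frame equations as above and F(t,x) = det[γ'(t), ξ(t), x − γ(t)], the conditions F(t₀,x) = F_t(t₀,x) = F_{tt}(t₀,x) = 0 hold if and only if σ(t₀) ≠ 0 and x = γ(t₀) + σ(t₀)⁻¹ ξ(t₀). -/
def D3 (u v w : Fin 3 → ℝ) : ℝ := Matrix.det (Matrix.of ![u, v, w])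

lemma D3_expand (u v w : Fin 3 → ℝ) : D3 u v w =
    u 0 * v 1 * w 2 - u 0 * v 2 * w 1 - u 1 * v 0 * w 2 + u 1 * v 2 * w 0
      + u 2 * v 0 * w 1 - u 2 * v 1 * w 0 := by
  simp [D3, Matrix.det_fin_three]

lemma D3_hasDerivAt {u v w : ℝ → Fin 3 → ℝ} {u' v' w' : Fin 3 → ℝ} {t : ℝ}
    (hu : HasDerivAt u u' t) (hv : HasDerivAt v v' t) (hw : HasDerivAt w w' t) :
    HasDerivAt (fun s => D3 (u s) (v s) (w s))
      (D3 u' (v t) (w t) + D3 (u t) v' (w t) + D3 (u t) (v t) w') t := by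
  have hu' : ∀ i, HasDerivAt (fun s => u s i) (u' i) t := hasDerivAt_pi.mp hu
  have hv' : ∀ i, HasDerivAt (fun s => v s i) (v' i) t := hasDerivAt_pi.mp hv
  have hw' : ∀ i, HasDerivAt (fun s => w s i) (w' i) t := hasDerivAt_pi.mp hw
  have key : HasDerivAt (fun s => u s 0 * v s 1 * w s 2 - u s 0 * v s 2 * w s 1
      - u s 1 * v s 0 * w s 2 + u s 1 * v s 2 * w s 0
      + u s 2 * v s 0 * w s 1 - u s 2 * v s 1 * w s 0)
      (D3 u' (v t) (w t) + D3 (u t) v' (w t) + D3 (u t) (v t) w') t := by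
    have h1 := ((hu' 0).mul (hv' 1)).mul (hw' 2)
    have h2 := ((hu' 0).mul (hv' 2)).mul (hw' 1)
    have h3 := ((hu' 1).mul (hv' 0)).mul (hw' 2)
    have h4 := ((hu' 1).mul (hv' 2)).mul (hw' 0)
    have h5 := ((hu' 2).mul (hv' 0)).mul (hw' 1)
    have h6 := ((hu' 2).mul (hv' 1)).mul (hw' 0)
    have htot := ((((h1.sub h2).sub h3).add h4).add h5).sub h6
    refine htot.congr_deriv ?_
    simp only [D3_expand, Pi.mul_apply]
    try ring
  have heq : (fun s => D3 (u s) (v s) (w s)) = (fun s => u s 0 * v s 1 * w s 2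
      - u s 0 * v s 2 * w s 1 - u s 1 * v s 0 * w s 2 + u s 1 * v s 2 * w s 0
      + u s 2 * v s 0 * w s 1 - u s 2 * v s 1 * w s 0) := by
    funext s; rw [D3_expand]
  rw [heq]; exact key

lemma cramer3 (u v w p : Fin 3 → ℝ) (hdet : D3 u v w = 1)
    (hA : D3 v w p = 0) (hB : D3 u w p = 0) : p = (D3 u v p) • w := by
  rw [D3_expand] at hdet hA hB
  funext i
  fin_cases i
  · show p 0 = ((D3 u v p) • w) 0
    rw [Pi.smul_apply, smul_eq_mul, D3_expand]
    linear_combination (-(p 0)) * hdet + (u 0) * hA + (-(v 0)) * hB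
  · show p 1 = ((D3 u v p) • w) 1
    rw [Pi.smul_apply, smul_eq_mul, D3_expand]
    linear_combination (-(p 1)) * hdet + (u 1) * hA + (-(v 1)) * hB
  · show p 2 = ((D3 u v p) • w) 2
    rw [Pi.smul_apply, smul_eq_mul, D3_expand]
    linear_combination (-(p 2)) * hdet + (u 2) * hA + (-(v 2)) * hB

open scoped ContDiff in
lemma diff_deriv {f : ℝ → Fin 3 → ℝ} (h : ContDiff ℝ (⊤ : ℕ∞) f) :
    Differentiable ℝ (deriv f) := by
  have h1 : ContDiff ℝ (∞ : WithTop ℕ∞) f := h.of_le (by simp)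
  exact (contDiff_infty_iff_deriv.mp h1).2.differentiable (by simp)

/-- The singular set of the tangent-plane family: `F = F_t = F_tt = 0` at `t₀` iff
`σ t₀ ≠ 0` and `x = γ(t₀) + σ(t₀)⁻¹ ξ(t₀)`. -/
theorem stmt_5 (γ η ξ : ℝ → Fin 3 → ℝ) (μ σ τ₁ τ₂ : ℝ → ℝ)
    (hγ : ContDiff ℝ (⊤ : ℕ∞) γ) (hη : ContDiff ℝ (⊤ : ℕ∞) η) (hξ : ContDiff ℝ (⊤ : ℕ∞) ξ)
    (hμ : ContDiff ℝ (⊤ : ℕ∞) μ) (hσ : ContDiff ℝ (⊤ : ℕ∞) σ)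
    (hτ₁ : ContDiff ℝ (⊤ : ℕ∞) τ₁) (hτ₂ : ContDiff ℝ (⊤ : ℕ∞) τ₂)
    (heq1 : ∀ t, deriv (deriv γ) t = η t)
    (heq2 : ∀ t, deriv η t = -(μ t) • deriv γ t - (τ₁ t) • η t + (τ₂ t) • ξ t)
    (heq3 : ∀ t, deriv ξ t = -(σ t) • deriv γ t + (τ₁ t) • ξ t)
    (hdet : ∀ t, Matrix.det (Matrix.of ![deriv γ t, η t, ξ t]) = 1)
    (F : ℝ → (Fin 3 → ℝ) → ℝ)
    (hF : ∀ t x, F t x = Matrix.det (Matrix.of ![deriv γ t, ξ t, x - γ t])) :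
    ∀ t₀ x, (F t₀ x = 0 ∧ deriv (fun u => F u x) t₀ = 0 ∧
        iteratedDeriv 2 (fun u => F u x) t₀ = 0) ↔
      (σ t₀ ≠ 0 ∧ x = γ t₀ + (σ t₀)⁻¹ • ξ t₀) := by
  -- basic differentiability
  have hγd : Differentiable ℝ γ := hγ.differentiable (by simp)
  have hgd : Differentiable ℝ (deriv γ) := diff_deriv hγ
  have hηd : Differentiable ℝ η := hη.differentiable (by simp)
  have hξd : Differentiable ℝ ξ := hξ.differentiable (by simp)
  have hg' : ∀ t, HasDerivAt (deriv γ) (η t) t := fun t => by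
    have := (hgd t).hasDerivAt; rwa [heq1 t] at this
  have hη' : ∀ t, HasDerivAt η
      (-(μ t) • deriv γ t - (τ₁ t) • η t + (τ₂ t) • ξ t) t := fun t => by
    have := (hηd t).hasDerivAt; rwa [heq2 t] at this
  have hξ' : ∀ t, HasDerivAt ξ (-(σ t) • deriv γ t + (τ₁ t) • ξ t) t := fun t => by
    have := (hξd t).hasDerivAt; rwa [heq3 t] at this
  intro t₀ x
  have hXd : ∀ t, HasDerivAt (fun s => x - γ s) (-(deriv γ t)) t := fun t => by
    have h := (hasDerivAt_const t x).sub (hγd t).hasDerivAt; simp only [zero_sub] at h; exact h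
  have hfun : (fun u => F u x) = (fun u => D3 (deriv γ u) (ξ u) (x - γ u)) := by
    funext u; rw [hF]; rfl
  -- first derivative
  have hf' : ∀ t, HasDerivAt (fun u => D3 (deriv γ u) (ξ u) (x - γ u))
      (D3 (η t) (ξ t) (x - γ t)
        + τ₁ t * D3 (deriv γ t) (ξ t) (x - γ t)) t := fun t => by
    have h := D3_hasDerivAt (hg' t) (hξ' t) (hXd t)
    convert h using 1
    simp only [D3_expand, Pi.add_apply, Pi.sub_apply, Pi.neg_apply, Pi.smul_apply,
      smul_eq_mul]
    ring
  have hderiv : deriv (fun u => D3 (deriv γ u) (ξ u) (x - γ u))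
      = fun t => D3 (η t) (ξ t) (x - γ t)
        + τ₁ t * D3 (deriv γ t) (ξ t) (x - γ t) := funext fun t => (hf' t).deriv
  -- the determinant hypothesis in D3 form
  have hd : D3 (deriv γ t₀) (η t₀) (ξ t₀) = 1 := hdet t₀
  -- second derivative
  have hG := D3_hasDerivAt (hη' t₀) (hξ' t₀) (hXd t₀)
  have hτf := ((hτ₁.differentiable (by simp) t₀).hasDerivAt).mul (hf' t₀)
  have hdd : deriv (deriv (fun u => D3 (deriv γ u) (ξ u) (x - γ u))) t₀
      = -(μ t₀) * D3 (deriv γ t₀) (ξ t₀) (x - γ t₀)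
        + σ t₀ * D3 (deriv γ t₀) (η t₀) (x - γ t₀) - 1
        + deriv τ₁ t₀ * D3 (deriv γ t₀) (ξ t₀) (x - γ t₀)
        + τ₁ t₀ * (D3 (η t₀) (ξ t₀) (x - γ t₀)
            + τ₁ t₀ * D3 (deriv γ t₀) (ξ t₀) (x - γ t₀)) := by
    rw [hderiv]
    rw [HasDerivAt.deriv (f := fun t => D3 (η t) (ξ t) (x - γ t) + τ₁ t * D3 (deriv γ t) (ξ t) (x - γ t)) (hG.add hτf)]
    rw [D3_expand] at hd
    simp only [D3_expand, Pi.add_apply, Pi.sub_apply, Pi.neg_apply, Pi.smul_apply,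
      smul_eq_mul]
    linear_combination (-1 : ℝ) * hd
  constructor
  · rintro ⟨h0, h1, h2⟩
    rw [hfun] at h1 h2
    have h0' : D3 (deriv γ t₀) (ξ t₀) (x - γ t₀) = 0 := by rw [hF] at h0; exact h0
    rw [(hf' t₀).deriv, h0', mul_zero, add_zero] at h1
    rw [iteratedDeriv_succ, iteratedDeriv_one, hdd, h0', h1] at h2
    have hσH : σ t₀ * D3 (deriv γ t₀) (η t₀) (x - γ t₀) = 1 := by
      linear_combination h2
    have hσ0 : σ t₀ ≠ 0 := left_ne_zero_of_mul_eq_one hσH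
    refine ⟨hσ0, ?_⟩
    have hH : D3 (deriv γ t₀) (η t₀) (x - γ t₀) = (σ t₀)⁻¹ := by
      field_simp
      linear_combination hσH
    have hc := cramer3 (deriv γ t₀) (η t₀) (ξ t₀) (x - γ t₀) hd h1 h0'
    rw [hH] at hc
    exact sub_eq_iff_eq_add'.mp hc
  · rintro ⟨hσ0, hx⟩
    have hXv : x - γ t₀ = (σ t₀)⁻¹ • ξ t₀ := by rw [hx, add_sub_cancel_left]
    have F0 : D3 (deriv γ t₀) (ξ t₀) (x - γ t₀) = 0 := by
      rw [hXv]; simp only [D3_expand, Pi.smul_apply, smul_eq_mul]; ring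
    have G0 : D3 (η t₀) (ξ t₀) (x - γ t₀) = 0 := by
      rw [hXv]; simp only [D3_expand, Pi.smul_apply, smul_eq_mul]; ring
    have hσH : σ t₀ * D3 (deriv γ t₀) (η t₀) (x - γ t₀) = 1 := by
      rw [hXv]
      rw [D3_expand] at hd
      simp only [D3_expand, Pi.smul_apply, smul_eq_mul]
      linear_combination (σ t₀ * (σ t₀)⁻¹) * hd + mul_inv_cancel₀ hσ0
    refine ⟨?_, ?_, ?_⟩
    · rw [hF]; exact F0
    · rw [hfun, (hf' t₀).deriv, F0, G0, mul_zero, add_zero]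
    · rw [hfun, iteratedDeriv_succ, iteratedDeriv_one, hdd, F0, G0]
      linear_combination hσH
end

section
/- With F(t,x) = det[γ'(t), ξ(t), x − γ(t)] as above, σ(t₀) ≠ 0 and x₀ = γ(t₀) + σ(t₀)⁻¹ξ(t₀): F(·, x₀) has an A₂ singularity at t₀ (F = F_t = F_{tt} = 0, F_{ttt} ≠ 0) if and only if (σ_t − στ₁¹)(t₀) ≠ 0; and F(·, x₀) has an A₃ singularity at t₀ (F = F_t = F_{tt} = F_{ttt} = 0, F_{tttt} ≠ 0) if and only if (σ_t − στ₁¹)(t₀) = 0 and (σ_t − στ₁¹)_t(t₀) ≠ 0. -/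
private lemma det3_expand (a b c : Fin 3 → ℝ) :
    Matrix.det (Matrix.of ![a, b, c]) =
      a 0 * (b 1 * c 2) - a 0 * (b 2 * c 1) - a 1 * (b 0 * c 2)
        + a 1 * (b 2 * c 0) + a 2 * (b 0 * c 1) - a 2 * (b 1 * c 0) := by
  rw [Matrix.det_fin_three]
  simp only [Matrix.of_apply, Matrix.cons_val', Matrix.cons_val_zero, Matrix.cons_val_one,
    Matrix.head_cons, Matrix.cons_val_two, Matrix.tail_cons, Matrix.empty_val',
    Matrix.cons_val_fin_one, Matrix.head_fin_const]
  ring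

private lemma hasDerivAt_det3 {a b c : ℝ → Fin 3 → ℝ} {a' b' c' : Fin 3 → ℝ} {t : ℝ}
    (ha : HasDerivAt a a' t) (hb : HasDerivAt b b' t) (hc : HasDerivAt c c' t) :
    HasDerivAt (fun s => Matrix.det (Matrix.of ![a s, b s, c s]))
      (Matrix.det (Matrix.of ![a', b t, c t]) + Matrix.det (Matrix.of ![a t, b', c t])
        + Matrix.det (Matrix.of ![a t, b t, c'])) t := by
  have hai := hasDerivAt_pi.mp ha
  have hbi := hasDerivAt_pi.mp hb
  have hci := hasDerivAt_pi.mp hc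
  simp only [det3_expand]
  have H := ((((((hai 0).mul ((hbi 1).mul (hci 2))).sub
      ((hai 0).mul ((hbi 2).mul (hci 1)))).sub
      ((hai 1).mul ((hbi 0).mul (hci 2)))).add
      ((hai 1).mul ((hbi 2).mul (hci 0)))).add
      ((hai 2).mul ((hbi 0).mul (hci 1)))).sub
      ((hai 2).mul ((hbi 1).mul (hci 0)))
  exact H.congr_deriv (by simp only [Pi.mul_apply]; ring)

private lemma aux_diff {f : ℝ → ℝ} (hf : ContDiff ℝ ((⊤ : ℕ∞) : WithTop ℕ∞) f) :
    ∀ t, HasDerivAt f (deriv f t) t := fun t => ((hf.differentiable (by simp)) t).hasDerivAt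

private lemma aux_deriv {f : ℝ → ℝ} (hf : ContDiff ℝ ((⊤ : ℕ∞) : WithTop ℕ∞) f) :
    ContDiff ℝ ((⊤ : ℕ∞) : WithTop ℕ∞) (deriv f) := (contDiff_infty_iff_deriv.mp hf).2

theorem test : True := trivial

/-- A₂ and A₃ singularities of `t ↦ F(t, x₀)` at `t₀` for
`x₀ = γ(t₀) + σ(t₀)⁻¹ ξ(t₀)`, characterized by `σ_t − στ₁¹`. -/
theorem stmt_6 (γ η ξ : ℝ → Fin 3 → ℝ) (μ σ τ₁ τ₂ : ℝ → ℝ)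
    (hγ : ContDiff ℝ (⊤ : ℕ∞) γ) (hη : ContDiff ℝ (⊤ : ℕ∞) η) (hξ : ContDiff ℝ (⊤ : ℕ∞) ξ)
    (hμ : ContDiff ℝ (⊤ : ℕ∞) μ) (hσ : ContDiff ℝ (⊤ : ℕ∞) σ)
    (hτ₁ : ContDiff ℝ (⊤ : ℕ∞) τ₁) (hτ₂ : ContDiff ℝ (⊤ : ℕ∞) τ₂)
    (heq1 : ∀ t, deriv (deriv γ) t = η t)
    (heq2 : ∀ t, deriv η t = -(μ t) • deriv γ t - (τ₁ t) • η t + (τ₂ t) • ξ t)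
    (heq3 : ∀ t, deriv ξ t = -(σ t) • deriv γ t + (τ₁ t) • ξ t)
    (hdet : ∀ t, Matrix.det (Matrix.of ![deriv γ t, η t, ξ t]) = 1)
    (F : ℝ → (Fin 3 → ℝ) → ℝ)
    (hF : ∀ t x, F t x = Matrix.det (Matrix.of ![deriv γ t, ξ t, x - γ t]))
    (t₀ : ℝ) (hσ0 : σ t₀ ≠ 0) (x₀ : Fin 3 → ℝ)
    (hx₀ : x₀ = γ t₀ + (σ t₀)⁻¹ • ξ t₀) :
    ((F t₀ x₀ = 0 ∧ deriv (fun u => F u x₀) t₀ = 0 ∧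
        iteratedDeriv 2 (fun u => F u x₀) t₀ = 0 ∧
        iteratedDeriv 3 (fun u => F u x₀) t₀ ≠ 0) ↔
      deriv σ t₀ - σ t₀ * τ₁ t₀ ≠ 0) ∧
    ((F t₀ x₀ = 0 ∧ deriv (fun u => F u x₀) t₀ = 0 ∧
        iteratedDeriv 2 (fun u => F u x₀) t₀ = 0 ∧
        iteratedDeriv 3 (fun u => F u x₀) t₀ = 0 ∧
        iteratedDeriv 4 (fun u => F u x₀) t₀ ≠ 0) ↔
      (deriv σ t₀ - σ t₀ * τ₁ t₀ = 0 ∧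
        deriv (fun t => deriv σ t - σ t * τ₁ t) t₀ ≠ 0)) := by
  -- infinite smoothness (weaken from analytic)
  have hγI : ContDiff ℝ ((⊤ : ℕ∞) : WithTop ℕ∞) γ := hγ.of_le (by simp)
  have hξI : ContDiff ℝ ((⊤ : ℕ∞) : WithTop ℕ∞) ξ := hξ.of_le (by simp)
  have hηI : ContDiff ℝ ((⊤ : ℕ∞) : WithTop ℕ∞) η := hη.of_le (by simp)
  have hμI : ContDiff ℝ ((⊤ : ℕ∞) : WithTop ℕ∞) μ := hμ.of_le (by simp)
  have hσI : ContDiff ℝ ((⊤ : ℕ∞) : WithTop ℕ∞) σ := hσ.of_le (by simp)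
  have hτ₁I : ContDiff ℝ ((⊤ : ℕ∞) : WithTop ℕ∞) τ₁ := hτ₁.of_le (by simp)
  have hτ₂I : ContDiff ℝ ((⊤ : ℕ∞) : WithTop ℕ∞) τ₂ := hτ₂.of_le (by simp)
  have hdγ : ContDiff ℝ ((⊤ : ℕ∞) : WithTop ℕ∞) (deriv γ) := (contDiff_infty_iff_deriv.mp hγI).2
  -- scalar derivatives
  have dσ := aux_diff hσI
  have dσ' := aux_diff (aux_deriv hσI)
  have dμ := aux_diff hμI
  have dμ' := aux_diff (aux_deriv hμI)
  have dτ₁ := aux_diff hτ₁I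
  have dτ₁' := aux_diff (aux_deriv hτ₁I)
  have dτ₁'' := aux_diff (aux_deriv (aux_deriv hτ₁I))
  have dτ₂ := aux_diff hτ₂I
  -- vector derivatives
  have da : ∀ t, HasDerivAt (deriv γ) (η t) t := fun t => by
    rw [← heq1 t]
    exact ((hdγ.differentiable (by simp)) t).hasDerivAt
  have dξv : ∀ t, HasDerivAt ξ (-(σ t) • deriv γ t + (τ₁ t) • ξ t) t := fun t => by
    rw [← heq3 t]
    exact ((hξI.differentiable (by simp)) t).hasDerivAt
  have dηv : ∀ t, HasDerivAt η (-(μ t) • deriv γ t - (τ₁ t) • η t + (τ₂ t) • ξ t) t := fun t => by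
    rw [← heq2 t]
    exact ((hηI.differentiable (by simp)) t).hasDerivAt
  have dw : ∀ t, HasDerivAt (fun s => x₀ - γ s) (-(deriv γ t)) t := fun t =>
    HasDerivAt.const_sub x₀ ((hγI.differentiable (by simp)) t).hasDerivAt
  -- the three determinant functions
  set A : ℝ → ℝ := fun t => Matrix.det (Matrix.of ![deriv γ t, ξ t, x₀ - γ t]) with hAdef
  set B : ℝ → ℝ := fun t => Matrix.det (Matrix.of ![η t, ξ t, x₀ - γ t]) with hBdef
  set C : ℝ → ℝ := fun t => Matrix.det (Matrix.of ![deriv γ t, η t, x₀ - γ t]) with hCdef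
  have hx : x₀ - γ t₀ = (σ t₀)⁻¹ • ξ t₀ := by rw [hx₀, add_sub_cancel_left]
  have hA0 : A t₀ = 0 := by
    simp only [hAdef, hx, det3_expand, Pi.smul_apply, smul_eq_mul]
    ring
  have hB0 : B t₀ = 0 := by
    simp only [hBdef, hx, det3_expand, Pi.smul_apply, smul_eq_mul]
    ring
  have hC0 : C t₀ = (σ t₀)⁻¹ := by
    have hd := hdet t₀
    rw [det3_expand] at hd
    simp only [hCdef, hx, det3_expand, Pi.smul_apply, smul_eq_mul]
    linear_combination (σ t₀)⁻¹ * hd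
  -- first derivatives of A, B, C
  have dA : ∀ t, HasDerivAt A (B t + τ₁ t * A t) t := by
    intro t
    have h := hasDerivAt_det3 (da t) (dξv t) (dw t)
    rw [hAdef]
    convert h using 1
    simp only [hAdef, hBdef, det3_expand, Pi.add_apply, Pi.sub_apply, Pi.smul_apply,
      Pi.neg_apply, smul_eq_mul]
    ring
  have dB : ∀ t, HasDerivAt B (σ t * C t - μ t * A t - 1) t := by
    intro t
    have h := hasDerivAt_det3 (dηv t) (dξv t) (dw t)
    have hd := hdet t
    rw [det3_expand] at hd
    rw [hBdef]
    convert h using 1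
    simp only [hAdef, hCdef, det3_expand, Pi.add_apply, Pi.sub_apply, Pi.smul_apply,
      Pi.neg_apply, smul_eq_mul]
    linear_combination hd
  have dC : ∀ t, HasDerivAt C (τ₂ t * A t - τ₁ t * C t) t := by
    intro t
    have h := hasDerivAt_det3 (da t) (dηv t) (dw t)
    rw [hCdef]
    convert h using 1
    simp only [hAdef, hCdef, det3_expand, Pi.add_apply, Pi.sub_apply, Pi.smul_apply,
      Pi.neg_apply, smul_eq_mul]
    ring
  -- higher-derivative chain
  set g1f : ℝ → ℝ := fun t => B t + τ₁ t * A t with hg1def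
  set g2f : ℝ → ℝ := fun t =>
    σ t * C t - μ t * A t - 1 + (deriv τ₁ t * A t + τ₁ t * (B t + τ₁ t * A t)) with hg2def
  set g3f : ℝ → ℝ := fun t =>
    deriv σ t * C t + σ t * (τ₂ t * A t - τ₁ t * C t)
      - (deriv μ t * A t + μ t * (B t + τ₁ t * A t))
      + (deriv (deriv τ₁) t * A t + deriv τ₁ t * (B t + τ₁ t * A t)
        + (deriv τ₁ t * (B t + τ₁ t * A t)
          + τ₁ t * (σ t * C t - μ t * A t - 1
            + (deriv τ₁ t * A t + τ₁ t * (B t + τ₁ t * A t))))) with hg3def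
  have dg1 : ∀ t, HasDerivAt g1f (g2f t) t := by
    intro t
    rw [hg1def, hg2def]
    exact (dB t).add ((dτ₁ t).mul (dA t))
  have dg2 : ∀ t, HasDerivAt g2f (g3f t) t := by
    intro t
    rw [hg2def, hg3def]
    exact ((((dσ t).mul (dC t)).sub ((dμ t).mul (dA t))).sub_const 1).add
      (((dτ₁' t).mul (dA t)).add ((dτ₁ t).mul ((dB t).add ((dτ₁ t).mul (dA t)))))
  have dg3 : HasDerivAt g3f
      (A t₀ * (μ t₀ ^ 2 - 3 * μ t₀ * τ₁ t₀ ^ 2 - 4 * μ t₀ * deriv τ₁ t₀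
          - 3 * deriv μ t₀ * τ₁ t₀ - deriv (deriv μ) t₀ + σ t₀ * τ₁ t₀ * τ₂ t₀
          + σ t₀ * deriv τ₂ t₀ + 2 * deriv σ t₀ * τ₂ t₀ + τ₁ t₀ ^ 4
          + 6 * τ₁ t₀ ^ 2 * deriv τ₁ t₀ + 4 * τ₁ t₀ * deriv (deriv τ₁) t₀
          + 3 * deriv τ₁ t₀ ^ 2 + deriv (deriv (deriv τ₁)) t₀)
        + B t₀ * (-(2 * μ t₀ * τ₁ t₀) - 2 * deriv μ t₀ + σ t₀ * τ₂ t₀ + τ₁ t₀ ^ 3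
          + 5 * τ₁ t₀ * deriv τ₁ t₀ + 3 * deriv (deriv τ₁) t₀)
        + C t₀ * (-(μ t₀ * σ t₀) + σ t₀ * τ₁ t₀ ^ 2 + 2 * σ t₀ * deriv τ₁ t₀
          - deriv σ t₀ * τ₁ t₀ + deriv (deriv σ) t₀)
        + μ t₀ - τ₁ t₀ ^ 2 - 3 * deriv τ₁ t₀) t₀ := by
    rw [hg3def]
    have X1 := ((dσ' t₀).mul (dC t₀)).add
      ((dσ t₀).mul (((dτ₂ t₀).mul (dA t₀)).sub ((dτ₁ t₀).mul (dC t₀))))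
    have X2 := ((dμ' t₀).mul (dA t₀)).add
      ((dμ t₀).mul ((dB t₀).add ((dτ₁ t₀).mul (dA t₀))))
    have Y1 := ((dτ₁'' t₀).mul (dA t₀)).add
      ((dτ₁' t₀).mul ((dB t₀).add ((dτ₁ t₀).mul (dA t₀))))
    have Z := ((((dσ t₀).mul (dC t₀)).sub ((dμ t₀).mul (dA t₀))).sub_const 1).add
      (((dτ₁' t₀).mul (dA t₀)).add ((dτ₁ t₀).mul ((dB t₀).add ((dτ₁ t₀).mul (dA t₀)))))
    have Y2 := ((dτ₁' t₀).mul ((dB t₀).add ((dτ₁ t₀).mul (dA t₀)))).add ((dτ₁ t₀).mul Z)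
    have h := (X1.sub X2).add (Y1.add Y2)
    exact h.congr_deriv (by simp only [Pi.mul_apply, Pi.add_apply, Pi.sub_apply]; ring)
  have edA : deriv A = g1f := funext fun t => (dA t).deriv
  have edg1 : deriv g1f = g2f := funext fun t => (dg1 t).deriv
  have edg2 : deriv g2f = g3f := funext fun t => (dg2 t).deriv
  -- values of the derivatives at t₀
  have hgA : (fun u => F u x₀) = A := funext fun u => by rw [hF, hAdef]
  have eF : F t₀ x₀ = A t₀ := by rw [hF, hAdef]
  have f1 : deriv A t₀ = 0 := by
    rw [edA, hg1def]
    simp only [hA0, hB0]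
    ring
  have f2 : iteratedDeriv 2 A t₀ = 0 := by
    rw [show (2 : ℕ) = 1 + 1 from rfl, iteratedDeriv_succ, iteratedDeriv_one,
      edA, edg1, hg2def]
    simp only [hA0, hB0, hC0]
    field_simp
    ring
  have f3 : iteratedDeriv 3 A t₀ = (deriv σ t₀ - σ t₀ * τ₁ t₀) / σ t₀ := by
    rw [show (3 : ℕ) = 1 + 1 + 1 from rfl, iteratedDeriv_succ, iteratedDeriv_succ,
      iteratedDeriv_one, edA, edg1, edg2, hg3def]
    simp only [hA0, hB0, hC0]
    field_simp
    ring
  have f4 : iteratedDeriv 4 A t₀ = deriv (fun t => deriv σ t - σ t * τ₁ t) t₀ / σ t₀ := by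
    have dP : deriv (fun t => deriv σ t - σ t * τ₁ t) t₀ =
        deriv (deriv σ) t₀ - (deriv σ t₀ * τ₁ t₀ + σ t₀ * deriv τ₁ t₀) :=
      ((dσ' t₀).sub ((dσ t₀).mul (dτ₁ t₀))).deriv
    rw [show (4 : ℕ) = 1 + 1 + 1 + 1 from rfl, iteratedDeriv_succ, iteratedDeriv_succ,
      iteratedDeriv_succ, iteratedDeriv_one, edA, edg1, edg2, dg3.deriv, dP,
      hA0, hB0, hC0]
    field_simp
    ring
  rw [hgA, eF, hA0, f1, f2, f3, f4]
  simp only [div_eq_zero_iff, hσ0, or_false, ne_eq, not_or, not_false_eq_true, and_true,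
    eq_self_iff_true, true_and]
end

section
/- Let M ⊂ ℝ^{n+2} be the graph of a smooth function f(t,y) with f, all f_{tᵢ}, and f_y vanishing at the origin, parameterized by ψ(t,y) = (t, y, f(t,y)). Suppose the Hessian (f_{tᵢtⱼ}(0)) is the identity matrix and f_{ytᵢ}(0) = 0 for all i. Let N ⊂ M be given by y = g(t) with g(0) = 0 and all g_{tᵢ}(0) = 0. Then ψ_y(0) spans the osculating Darboux direction of N ⊂ M at 0, and the shape operator S₁ at the origin, expressed in the basis {ψ_{t₁},...,ψ_{tₙ}}, has matrix (f_{tᵢtⱼy}(0)). -/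
section aux
variable {A B C : Type*} [NormedAddCommGroup A] [NormedSpace ℝ A]
  [NormedAddCommGroup B] [NormedSpace ℝ B] [NormedAddCommGroup C] [NormedSpace ℝ C]

lemma aux_partial_fst (φ : A × B → C) {t : A} {y : B}
    (h : DifferentiableAt ℝ φ (t, y)) (v : A) :
    fderiv ℝ (fun t' => φ (t', y)) t v = fderiv ℝ φ (t, y) (v, 0) := by
  have h1 : HasFDerivAt (fun t' : A => (t', y))
      ((ContinuousLinearMap.id ℝ A).prod 0) t :=
    (hasFDerivAt_id t).prodMk (hasFDerivAt_const y t)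
  have h2 := (h.hasFDerivAt.comp t h1).fderiv
  rw [show (fun t' => φ (t', y)) = φ ∘ (fun t' : A => (t', y)) from rfl, h2]
  rfl

lemma aux_partial_snd (φ : A × ℝ → C) {t : A} {y : ℝ}
    (h : DifferentiableAt ℝ φ (t, y)) :
    deriv (fun y' => φ (t, y')) y = fderiv ℝ φ (t, y) (0, 1) := by
  have h1 : HasFDerivAt (fun y' : ℝ => (t, y'))
      ((0 : ℝ →L[ℝ] A).prod (ContinuousLinearMap.id ℝ ℝ)) y :=
    (hasFDerivAt_const t y).prodMk (hasFDerivAt_id y)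
  have h2 := (h.hasFDerivAt.comp y h1).fderiv
  rw [← fderiv_apply_one_eq_deriv, show (fun y' => φ (t, y')) = φ ∘ (fun y' : ℝ => (t, y')) from rfl, h2]
  simp

lemma aux_fderiv_clm_apply (φ : A → ℝ) (hφ : ContDiff ℝ (⊤ : ℕ∞) φ) (p u w : A) :
    fderiv ℝ (fun q => fderiv ℝ φ q w) p u = fderiv ℝ (fderiv ℝ φ) p u w := by
  have hd : DifferentiableAt ℝ (fderiv ℝ φ) p :=
    ((hφ.fderiv_right (m := (⊤ : ℕ∞)) (by simp)).differentiable (by simp)).differentiableAt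
  have h2 := ((ContinuousLinearMap.apply ℝ ℝ w).hasFDerivAt.comp p hd.hasFDerivAt).fderiv
  rw [show (fun q => fderiv ℝ φ q w) = (ContinuousLinearMap.apply ℝ ℝ w) ∘ (fderiv ℝ φ) from rfl,
    h2]
  rfl

lemma aux_symm (φ : A → ℝ) (hφ : ContDiff ℝ (⊤ : ℕ∞) φ) (p u w : A) :
    fderiv ℝ (fderiv ℝ φ) p u w = fderiv ℝ (fderiv ℝ φ) p w u := by
  have h1 : ∀ q, HasFDerivAt φ (fderiv ℝ φ q) q := fun q =>
    ((hφ.differentiable (by simp)) q).hasFDerivAt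
  have h2 : HasFDerivAt (fderiv ℝ φ) (fderiv ℝ (fderiv ℝ φ) p) p :=
    (((hφ.fderiv_right (m := (⊤ : ℕ∞)) (by simp)).differentiable (by simp)) p).hasFDerivAt
  exact second_derivative_symmetric h1 h2 u w
end aux


/-- partial derivative of `f` in the `i`-th `t`-direction -/
noncomputable def pt {n : ℕ} (f : (Fin n → ℝ) → ℝ → ℝ) (i : Fin n)
    (t : Fin n → ℝ) (y : ℝ) : ℝ :=
  fderiv ℝ (fun t' => f t' y) t (Pi.single i 1)

noncomputable def ptt {n : ℕ} (f : (Fin n → ℝ) → ℝ → ℝ) (i j : Fin n)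
    (t : Fin n → ℝ) (y : ℝ) : ℝ :=
  fderiv ℝ (fun t' => pt f i t' y) t (Pi.single j 1)

noncomputable def py {n : ℕ} (f : (Fin n → ℝ) → ℝ → ℝ) (t : Fin n → ℝ) (y : ℝ) : ℝ :=
  deriv (fun y' => f t y') y

noncomputable def pyt {n : ℕ} (f : (Fin n → ℝ) → ℝ → ℝ) (j : Fin n)
    (t : Fin n → ℝ) (y : ℝ) : ℝ :=
  fderiv ℝ (fun t' => py f t' y) t (Pi.single j 1)

noncomputable def ptty {n : ℕ} (f : (Fin n → ℝ) → ℝ → ℝ) (i j : Fin n)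
    (t : Fin n → ℝ) (y : ℝ) : ℝ :=
  deriv (fun y' => ptt f i j t y') y

/-- For the graph `ψ(t,y) = (t,y,f(t,y))` with identity Hessian in `t` and `f_{ytᵢ}(0) = 0`,
and `N : y = g(t)` with `g(0)=0`, `dg(0)=0`: the Darboux field
`ξ = Σ aᵢ ψ_{tᵢ} + ψ_y` (with `Σᵢ aᵢ f_{tᵢtⱼ} + f_{ytⱼ} = 0` along `N`) satisfies `a(0) = 0`
(so `ψ_y(0)` spans the Darboux direction), and `(aᵢ)_{tⱼ}(0) = −f_{tᵢtⱼy}(0)`, i.e. the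
shape operator `S₁` at the origin has matrix `(f_{tᵢtⱼy}(0))` in the basis `{ψ_{tᵢ}}`. -/
theorem stmt_7 {n : ℕ} (f : (Fin n → ℝ) → ℝ → ℝ) (g : (Fin n → ℝ) → ℝ)
    (a : (Fin n → ℝ) → Fin n → ℝ)
    (hf : ContDiff ℝ (⊤ : ℕ∞) (fun p : (Fin n → ℝ) × ℝ => f p.1 p.2))
    (hg : ContDiff ℝ (⊤ : ℕ∞) g) (ha : ContDiff ℝ (⊤ : ℕ∞) a)
    (hf0 : f 0 0 = 0) (hft0 : ∀ i, pt f i 0 0 = 0) (hfy0 : py f 0 0 = 0)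
    (hHess : ∀ i j, ptt f i j 0 0 = if i = j then 1 else 0)
    (hfyt : ∀ j, pyt f j 0 0 = 0)
    (hg0 : g 0 = 0) (hdg0 : fderiv ℝ g 0 = 0)
    (hDarboux : ∀ t j, (∑ i, a t i * ptt f i j t (g t)) + pyt f j t (g t) = 0) :
    a 0 = 0 ∧
    ∀ i j, fderiv ℝ (fun t => a t i) 0 (Pi.single j 1) = -ptty f i j 0 0 := by
  -- Part 1
  have ha0 : a 0 = 0 := by
    funext j
    have h := hDarboux 0 j
    rw [hg0, hfyt j, add_zero] at h
    have hs : ∑ i, a 0 i * ptt f i j 0 0 = a 0 j := by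
      rw [Finset.sum_congr rfl (fun i _ => by rw [hHess i j])]
      simp [mul_ite]
    rw [hs] at h
    exact h
  refine ⟨ha0, ?_⟩
  set F : (Fin n → ℝ) × ℝ → ℝ := fun p => f p.1 p.2 with hFdef
  have hFd : Differentiable ℝ F := hf.differentiable (by simp)
  set H : Fin n → ((Fin n → ℝ) × ℝ) → ℝ :=
    fun i p => fderiv ℝ F p (Pi.single i 1, 0) with hHdef
  have hH : ∀ i, ContDiff ℝ (⊤ : ℕ∞) (H i) := fun i =>
    (hf.fderiv_right (by simp)).clm_apply contDiff_const
  have hHd : ∀ i, Differentiable ℝ (H i) := fun i => (hH i).differentiable (by simp)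
  have hpt : ∀ i t y, pt f i t y = H i (t, y) := fun i t y =>
    aux_partial_fst F (hFd _) _
  have hptt : ∀ i j t y, ptt f i j t y = fderiv ℝ (H i) (t, y) (Pi.single j 1, 0) := by
    intro i j t y
    show fderiv ℝ (fun t' => pt f i t' y) t (Pi.single j 1) = _
    rw [show (fun t' => pt f i t' y) = (fun t' => H i (t', y)) from
      funext fun t' => hpt i t' y]
    exact aux_partial_fst (H i) ((hHd i) _) _
  have hK : ContDiff ℝ (⊤ : ℕ∞) (fun p : (Fin n → ℝ) × ℝ => fderiv ℝ F p ((0 : Fin n → ℝ), (1:ℝ))) :=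
    (hf.fderiv_right (by simp)).clm_apply contDiff_const
  have hpy : ∀ t y, py f t y = fderiv ℝ F (t, y) ((0 : Fin n → ℝ), (1:ℝ)) := fun t y =>
    aux_partial_snd F (hFd _)
  have hpyt : ∀ j t y, pyt f j t y = fderiv ℝ (H j) (t, y) ((0 : Fin n → ℝ), (1:ℝ)) := by
    intro j t y
    show fderiv ℝ (fun t' => py f t' y) t (Pi.single j 1) = _
    rw [show (fun t' => py f t' y)
        = (fun t' => (fun p : (Fin n → ℝ) × ℝ => fderiv ℝ F p ((0:Fin n → ℝ),(1:ℝ))) (t', y)) from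
      funext fun t' => hpy t' y]
    rw [aux_partial_fst _ (hK.differentiable (by simp) _) _]
    rw [aux_fderiv_clm_apply F hf _ _ _, aux_symm F hf,
      ← aux_fderiv_clm_apply F hf]
  have hptty : ∀ i j, ptty f i j 0 0
      = fderiv ℝ (fun p => fderiv ℝ (H i) p (Pi.single j 1, 0))
          ((0 : Fin n → ℝ), (0:ℝ)) ((0 : Fin n → ℝ), (1:ℝ)) := by
    intro i j
    show deriv (fun y' => ptt f i j 0 y') 0 = _
    rw [show (fun y' => ptt f i j 0 y')
        = (fun y' => (fun p => fderiv ℝ (H i) p (Pi.single j 1, 0)) ((0 : Fin n → ℝ), y')) from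
      funext fun y' => hptt i j 0 y']
    exact aux_partial_snd _ (((hH i).fderiv_right (m := (⊤ : ℕ∞)) (by simp)).clm_apply
      contDiff_const |>.differentiable (by simp) |>.differentiableAt)
  -- chain rule through t ↦ (t, g t) at 0
  have hGd : HasFDerivAt (fun t : Fin n → ℝ => (t, g t))
      ((ContinuousLinearMap.id ℝ (Fin n → ℝ)).prod 0) 0 := by
    refine (hasFDerivAt_id 0).prodMk ?_
    have := ((hg.differentiable (by simp)) 0).hasFDerivAt
    rwa [hdg0] at this
  have chain : ∀ (φ : ((Fin n → ℝ) × ℝ) → ℝ), ContDiff ℝ (⊤ : ℕ∞) φ → ∀ v,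
      fderiv ℝ (fun t => φ (t, g t)) 0 v = fderiv ℝ φ ((0:Fin n → ℝ), (0:ℝ)) (v, 0) := by
    intro φ hφ v
    have hc := (((hφ.differentiable (by simp)) ((0 : Fin n → ℝ), g 0)).hasFDerivAt).comp 0 hGd
    rw [hg0] at hc
    rw [show (fun t => φ (t, g t)) = φ ∘ (fun t : Fin n → ℝ => (t, g t)) from rfl, hc.fderiv]
    rfl
  intro i j
  -- differentiate Darboux relation with second index i in direction e_j
  set Q : Fin n → (Fin n → ℝ) → ℝ :=
    fun k t => fderiv ℝ (H k) (t, g t) (Pi.single i 1, 0) with hQdef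
  set R : (Fin n → ℝ) → ℝ := fun t => fderiv ℝ (H i) (t, g t) ((0:Fin n → ℝ), (1:ℝ)) with hRdef
  have hQsmooth : ∀ k, ContDiff ℝ (⊤ : ℕ∞) (Q k) := fun k =>
    (((hH k).fderiv_right (by simp)).clm_apply contDiff_const).comp (contDiff_id.prodMk hg)
  have hRsmooth : ContDiff ℝ (⊤ : ℕ∞) R :=
    (((hH i).fderiv_right (by simp)).clm_apply contDiff_const).comp (contDiff_id.prodMk hg)
  have hAk : ∀ k, DifferentiableAt ℝ (fun t => a t k) 0 := by
    intro k
    have : Differentiable ℝ a := ha.differentiable (by simp)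
    exact (differentiable_pi.mp this k) 0
  have hzero : (fun t => (∑ k, a t k * Q k t) + R t) = fun _ => (0:ℝ) := by
    funext t
    have := hDarboux t i
    rw [show (∑ k, a t k * Q k t) = ∑ k, a t k * ptt f k i t (g t) from
      Finset.sum_congr rfl fun k _ => by rw [hptt k i t (g t)]]
    rw [show R t = pyt f i t (g t) from (hpyt i t (g t)).symm]
    exact this
  have hDsum : DifferentiableAt ℝ (fun t => ∑ k, a t k * Q k t) 0 :=
    DifferentiableAt.fun_sum fun k _ =>
      (hAk k).mul ((hQsmooth k).differentiable (by simp)).differentiableAt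
  have hDR : DifferentiableAt ℝ R 0 := (hRsmooth.differentiable (by simp)).differentiableAt
  have hfz : fderiv ℝ (fun t => (∑ k, a t k * Q k t) + R t) 0 (Pi.single j 1) = 0 := by
    rw [hzero]; simp
  rw [fderiv_fun_add hDsum hDR, ContinuousLinearMap.add_apply] at hfz
  have hsum_fderiv : fderiv ℝ (fun t => ∑ k, a t k * Q k t) 0 (Pi.single j 1)
      = fderiv ℝ (fun t => a t i) 0 (Pi.single j 1) := by
    rw [fderiv_fun_sum fun k _ =>
      (hAk k).fun_mul ((hQsmooth k).differentiable (by simp)).differentiableAt]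
    rw [ContinuousLinearMap.sum_apply]
    have step : ∀ k, fderiv ℝ (fun t => a t k * Q k t) 0 (Pi.single j 1)
        = (if k = i then 1 else 0) * fderiv ℝ (fun t => a t k) 0 (Pi.single j 1) := by
      intro k
      rw [fderiv_fun_mul (hAk k) ((hQsmooth k).differentiable (by simp)).differentiableAt]
      have hQ0 : Q k 0 = if k = i then 1 else 0 := by
        have : Q k 0 = ptt f k i 0 (g 0) := (hptt k i 0 (g 0)).symm
        rw [this, hg0, hHess k i]
      have ha0k : a 0 k = 0 := by rw [ha0]; rfl
      simp only [ha0k, hQ0, zero_smul, zero_add, ContinuousLinearMap.add_apply,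
        ContinuousLinearMap.zero_apply, ContinuousLinearMap.smul_apply, smul_eq_mul]
    rw [Finset.sum_congr rfl fun k _ => step k]
    simp
  rw [hsum_fderiv] at hfz
  have hR_fderiv : fderiv ℝ R 0 (Pi.single j 1) = ptty f i j 0 0 := by
    rw [hRdef]
    rw [chain (fun p => fderiv ℝ (H i) p ((0:Fin n → ℝ), (1:ℝ)))
      (((hH i).fderiv_right (by simp)).clm_apply contDiff_const) (Pi.single j 1)]
    rw [aux_fderiv_clm_apply (H i) (hH i), aux_symm (H i) (hH i),
      ← aux_fderiv_clm_apply (H i) (hH i)]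
    exact (hptty i j).symm
  rw [hR_fderiv] at hfz
  linarith
end

section
/- Let M ⊂ ℝ^{n+2} be locally given by z = ½(x₁² + ... + xₙ² + a y²) + P₃(x) + y P₂(x) + y² P₁(x) + P₀ y³ + O(4)(x,y) in coordinates (x, y, z), where P_k is homogeneous of degree k in x. For λ ∈ ℝ, the section of M by the hyperplane y = λz, projected to the (x,z)-hyperplane along the y-direction, is the graph z = ½|x|² + P₃(x) + O(4)(x); in particular its 3-jet at the origin is independent of λ. -/
open Asymptotics


lemma quad_bound {E F : Type*} [NormedAddCommGroup E] [NormedSpace ℝ E]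
    [NormedAddCommGroup F] [NormedSpace ℝ F] {g : E → F} (hg : ContDiff ℝ (⊤ : ℕ∞) g)
    (h0 : g 0 = 0) (h1 : fderiv ℝ g 0 = 0) : g =O[nhds 0] fun p => ‖p‖ ^ 2 := by
  have hdg : ContDiff ℝ 1 (fderiv ℝ g) := hg.fderiv_right (WithTop.coe_le_coe.2 le_top)
  have h2 : (fun p => fderiv ℝ g p) =O[nhds 0] fun p => p - 0 :=
    (hdg.differentiable one_ne_zero 0).isBigO_sub.congr_left (fun p => by rw [h1, sub_zero])
  rw [isBigO_iff] at h2
  obtain ⟨C, hC⟩ := h2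
  rw [Metric.eventually_nhds_iff] at hC
  obtain ⟨r, hr, hC⟩ := hC
  set D := max C 0 with hD
  have hD0 : 0 ≤ D := le_max_right _ _
  rw [isBigO_iff]
  refine ⟨D, Metric.eventually_nhds_iff.2 ⟨r, hr, fun {p} hp => ?_⟩⟩
  have key : ‖g p - g 0‖ ≤ (D * ‖p‖) * ‖p - 0‖ := by
    have hdiff : ∀ q ∈ Metric.closedBall (0 : E) ‖p‖, DifferentiableAt ℝ g q :=
      fun q _ => hg.differentiable (by simp) q
    have hbound : ∀ q ∈ Metric.closedBall (0 : E) ‖p‖, ‖fderiv ℝ g q‖ ≤ D * ‖p‖ := by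
      intro q hq
      have hqp : ‖q‖ ≤ ‖p‖ := by simpa [dist_eq_norm] using hq
      have hq' : dist q (0 : E) < r := by
        rw [dist_eq_norm, sub_zero]
        exact lt_of_le_of_lt hqp (by simpa [dist_eq_norm] using hp)
      calc ‖fderiv ℝ g q‖ ≤ C * ‖q - 0‖ := hC hq'
        _ ≤ D * ‖q‖ := by rw [sub_zero]; exact mul_le_mul_of_nonneg_right (le_max_left _ _) (norm_nonneg _)
        _ ≤ D * ‖p‖ := mul_le_mul_of_nonneg_left hqp hD0
    exact Convex.norm_image_sub_le_of_norm_fderiv_le hdiff hbound (convex_closedBall _ _)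
      (Metric.mem_closedBall_self (norm_nonneg p))
      (by simpa [dist_eq_norm] using le_refl ‖p‖)
  rw [h0, sub_zero, sub_zero] at key
  calc ‖g p‖ ≤ D * ‖p‖ * ‖p‖ := key
    _ = D * ‖p‖ ^ 2 := by ring
    _ ≤ D * ‖‖p‖ ^ 2‖ := by gcongr <;> simp [le_abs_self]

lemma little_sq (η d : ℝ → ℝ) (hd : ∀ t, HasDerivAt η (d t) t) (h0 : η 0 = 0)
    (ho : d =o[nhds 0] fun t => t) : η =o[nhds 0] fun t => t ^ 2 := by
  rw [isLittleO_iff]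
  intro ε hε
  have := (isLittleO_iff.1 ho) hε
  rw [Metric.eventually_nhds_iff] at this
  obtain ⟨δ, hδ, hb⟩ := this
  refine Metric.eventually_nhds_iff.2 ⟨δ, hδ, fun {t} ht => ?_⟩
  have ht' : |t| < δ := by simpa [dist_eq_norm] using ht
  have key : ‖η t - η 0‖ ≤ (ε * |t|) * ‖t - 0‖ := by
    have hdiff : ∀ q ∈ Metric.closedBall (0 : ℝ) |t|, DifferentiableAt ℝ η q :=
      fun q _ => (hd q).differentiableAt
    have hbound : ∀ q ∈ Metric.closedBall (0 : ℝ) |t|, ‖fderiv ℝ η q‖ ≤ ε * |t| := by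
      intro q hq
      have hq' : |q| ≤ |t| := by simpa [Real.dist_eq] using hq
      have : ‖fderiv ℝ η q‖ = ‖d q‖ := by
        rw [← norm_deriv_eq_norm_fderiv, (hd q).deriv]
      rw [this]
      calc ‖d q‖ ≤ ε * ‖q‖ := hb (by simpa [Real.dist_eq] using lt_of_le_of_lt hq' ht')
        _ ≤ ε * |t| := by
            rw [Real.norm_eq_abs]; exact mul_le_mul_of_nonneg_left hq' hε.le
    exact Convex.norm_image_sub_le_of_norm_fderiv_le hdiff hbound (convex_closedBall _ _)
      (Metric.mem_closedBall_self (abs_nonneg t)) (by simp [Real.dist_eq])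
  rw [h0, sub_zero, sub_zero] at key
  calc ‖η t‖ ≤ ε * |t| * ‖t‖ := key
    _ = ε * ‖t ^ 2‖ := by rw [Real.norm_eq_abs, Real.norm_eq_abs, abs_pow]; ring

lemma coeff_zero (A : ℝ) (h : (fun t : ℝ => A * t ^ 2) =o[nhds 0] fun t => t ^ 2) : A = 0 := by
  by_contra hA
  have := (isLittleO_iff.1 h) (show (0:ℝ) < |A|/2 by positivity)
  rw [Metric.eventually_nhds_iff] at this
  obtain ⟨δ, hδ, hb⟩ := this
  have := hb (y := δ/2) (by rw [Real.dist_eq]; rw [sub_zero]; rw [abs_of_pos (by linarith)]; linarith)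
  rw [Real.norm_eq_abs, Real.norm_eq_abs, abs_mul, abs_pow] at this
  have h2 : (0:ℝ) < |δ/2| ^ 2 := by positivity
  have hA' : 0 < |A| := abs_pos.2 hA
  nlinarith

lemma snd_deriv_id (h k : ℝ → ℝ) (c Q : ℝ)
    (hd : ∀ t, HasDerivAt h (k t) t)
    (hk : HasDerivAt k c 0) (hk0 : k 0 = 0) (h0 : h 0 = 0)
    (hQ : (fun t => h t - Q * t ^ 2) =o[nhds 0] fun t => t ^ 2) : c = 2 * Q := by
  have hk' : (fun t => k t - c * t) =o[nhds 0] fun t => t := by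
    have h1 := hasDerivAt_iff_isLittleO.1 hk
    simp only [sub_zero, smul_eq_mul, hk0] at h1
    exact (h1.congr_left fun t => by ring).congr_right fun t => rfl
  have hdη : ∀ t, HasDerivAt (fun t => h t - c / 2 * t ^ 2) (k t - c * t) t := by
    intro t
    have h2 : HasDerivAt (fun t : ℝ => c / 2 * t ^ 2) (c / 2 * (2 * t ^ 1)) t :=
      (hasDerivAt_pow 2 t).const_mul (c / 2)
    have h2' : HasDerivAt (fun t : ℝ => c / 2 * t ^ 2) (c * t) t := by
      convert h2 using 1; ring
    exact (hd t).sub h2'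
  have hη : (fun t => h t - c / 2 * t ^ 2) =o[nhds 0] fun t => t ^ 2 :=
    little_sq _ _ hdη (by simp [h0]) hk'
  have := coeff_zero (Q - c / 2) ((hη.sub hQ).congr_left fun t => by ring)
  linarith


set_option maxHeartbeats 2000000 in
/-- Transon plane computation: the sections of `M : z = F(x,y)` by the hyperplanes
`y = λz`, projected to the `(x,z)`-hyperplane, all have 3-jet `z = ½|x|² + P₃(x)`,
independent of `λ`. -/
theorem stmt_14 {n : ℕ} (a P0 : ℝ) (P3 P2 P1 : (Fin n → ℝ) → ℝ)
    (R F : (Fin n → ℝ) → ℝ → ℝ)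
    (Z : ℝ → (Fin n → ℝ) → ℝ)
    (hP3 : ∀ (c : ℝ) x, P3 (c • x) = c ^ 3 * P3 x)
    (hP2 : ∀ (c : ℝ) x, P2 (c • x) = c ^ 2 * P2 x)
    (hP1 : ∀ (c : ℝ) x, P1 (c • x) = c * P1 x)
    (hF : ∀ x y, F x y = (∑ i, x i ^ 2) / 2 + a * y ^ 2 / 2 + P3 x + y * P2 x
      + y ^ 2 * P1 x + P0 * y ^ 3 + R x y)
    (hFs : ContDiff ℝ (⊤ : ℕ∞) (fun p : (Fin n → ℝ) × ℝ => F p.1 p.2))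
    (hR : (fun p : (Fin n → ℝ) × ℝ => R p.1 p.2) =O[nhds 0] fun p => ‖p‖ ^ 4)
    (hZs : ∀ l : ℝ, ContDiff ℝ (⊤ : ℕ∞) (Z l)) (hZ0 : ∀ l : ℝ, Z l 0 = 0)
    (hZ : ∀ l : ℝ, ∀ᶠ x in nhds 0, Z l x = F x (l * Z l x)) :
    ∀ l : ℝ, (fun x => Z l x - ((∑ i, x i ^ 2) / 2 + P3 x)) =O[nhds 0]
      fun x => ‖x‖ ^ 4 := by
  intro l
  set f : (Fin n → ℝ) × ℝ → ℝ := fun p => F p.1 p.2 with hfdef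
  -- degenerate values
  have hP30 : P3 0 = 0 := by have := hP3 0 0; simpa using this
  have hP20 : P2 0 = 0 := by have := hP2 0 0; simpa using this
  have hP10 : P1 0 = 0 := by have := hP1 0 0; simpa using this
  have hR00 : R 0 0 = 0 := by
    obtain ⟨C, hC⟩ := isBigO_iff.1 hR
    have := hC.self_of_nhds
    simpa using this
  have hf00 : f 0 = 0 := by
    show F 0 0 = 0
    rw [hF]
    simp [hP30, hP20, hP10, hR00]
  -- ray expansion
  have hray : ∀ (v : Fin n → ℝ) (s t : ℝ),
      f (t • (v, s)) = t ^ 2 * ((∑ i, v i ^ 2 + a * s ^ 2) / 2)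
        + t ^ 3 * (P3 v + s * P2 v + s ^ 2 * P1 v + P0 * s ^ 3) + R (t • v) (t * s) := by
    intro v s t
    show F (t • v) (t * s) = _
    rw [hF, hP3, hP2, hP1]
    have : ∑ i, (t • v) i ^ 2 = t ^ 2 * ∑ i, v i ^ 2 := by
      rw [Finset.mul_sum]
      refine Finset.sum_congr rfl fun i _ => ?_
      simp [mul_pow]
    rw [this]
    ring
  -- R along rays
  have hRray : ∀ (v : Fin n → ℝ) (s : ℝ),
      (fun t : ℝ => R (t • v) (t * s)) =O[nhds 0] fun t => t ^ 4 := by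
    intro v s
    have htend : Filter.Tendsto (fun t : ℝ => t • ((v, s) : (Fin n → ℝ) × ℝ)) (nhds 0) (nhds 0) := by
      have : Continuous fun t : ℝ => t • ((v, s) : (Fin n → ℝ) × ℝ) :=
        continuous_id.smul continuous_const
      simpa using this.tendsto 0
    have := hR.comp_tendsto htend
    refine this.trans (isBigO_iff.2 ⟨‖((v, s) : (Fin n → ℝ) × ℝ)‖ ^ 4, ?_⟩)
    filter_upwards with t
    simp only [Function.comp_apply]
    have h1 : ‖‖t • ((v, s) : (Fin n → ℝ) × ℝ)‖ ^ 4‖ = (|t| * ‖((v, s) : (Fin n → ℝ) × ℝ)‖) ^ 4 := by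
      rw [norm_pow, norm_norm, norm_smul, Real.norm_eq_abs]
    rw [h1, mul_pow, Real.norm_eq_abs, abs_pow, mul_comm]
  -- little-o along rays
  have hrayo : ∀ (v : Fin n → ℝ) (s : ℝ),
      (fun t : ℝ => f (t • (v, s)) - ((∑ i, v i ^ 2 + a * s ^ 2) / 2) * t ^ 2)
        =o[nhds 0] fun t => t ^ 2 := by
    intro v s
    have h3 : (fun t : ℝ => t ^ 3 * (P3 v + s * P2 v + s ^ 2 * P1 v + P0 * s ^ 3))
        =o[nhds 0] fun t => t ^ 2 := by
      have := (isLittleO_pow_pow (show 2 < 3 by norm_num)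
        (𝕜 := ℝ)).const_mul_left (P3 v + s * P2 v + s ^ 2 * P1 v + P0 * s ^ 3)
      exact this.congr_left fun t => by ring
    have h4 : (fun t : ℝ => R (t • v) (t * s)) =o[nhds 0] fun t => t ^ 2 :=
      (hRray v s).trans_isLittleO (isLittleO_pow_pow (show 2 < 4 by norm_num))
    have := h3.add h4
    exact this.congr_left fun t => by rw [hray]; ring
  have hrayo1 : ∀ (v : Fin n → ℝ) (s : ℝ),
      (fun t : ℝ => f (t • (v, s))) =o[nhds 0] fun t => t := by
    intro v s
    have h2 : (fun t : ℝ => ((∑ i, v i ^ 2 + a * s ^ 2) / 2) * t ^ 2) =o[nhds 0] fun t => t := by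
      have := (isLittleO_pow_id (show 1 < 2 by norm_num)
        (𝕜 := ℝ)).const_mul_left ((∑ i, v i ^ 2 + a * s ^ 2) / 2)
      exact this
    have := ((hrayo v s).trans (isLittleO_pow_id (show 1 < 2 by norm_num))).add h2
    exact this.congr_left fun t => by ring
  -- the line through p
  have hline : ∀ (p : (Fin n → ℝ) × ℝ) (t : ℝ),
      HasDerivAt (fun t : ℝ => t • p) p t := by
    intro p t
    simpa using (hasDerivAt_id t).smul_const p
  have hDf0 : fderiv ℝ f 0 = 0 := by
    apply ContinuousLinearMap.ext
    intro p
    obtain ⟨v, s⟩ := p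
    have H1 : HasDerivAt (fun t : ℝ => f (t • ((v, s) : (Fin n → ℝ) × ℝ)))
        (fderiv ℝ f 0 (v, s)) 0 := by
      have hd := (hFs.differentiable (by simp) 0).hasFDerivAt
      have := hd.comp_hasDerivAt_of_eq 0 (hline (v, s) 0) (by simp)
      exact this
    have H2 : HasDerivAt (fun t : ℝ => f (t • ((v, s) : (Fin n → ℝ) × ℝ))) 0 0 := by
      rw [hasDerivAt_iff_isLittleO]
      refine ((hrayo1 v s).congr_left fun t => ?_).congr_right fun t => ?_
      · rw [zero_smul, hf00, smul_zero]; ring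
      · exact (sub_zero t).symm
    rw [H1.unique H2]
    rfl
  have hdiff : Differentiable ℝ f := hFs.differentiable (by simp)
  set B := fderiv ℝ (fderiv ℝ f) 0 with hBdef
  have hBder : HasFDerivAt (fderiv ℝ f) B 0 :=
    (((hFs.fderiv_right (m := 1) (WithTop.coe_le_coe.2 le_top)).differentiable one_ne_zero) 0).hasFDerivAt
  have hBpp : ∀ (v : Fin n → ℝ) (s : ℝ),
      B (v, s) (v, s) = 2 * ((∑ i, v i ^ 2 + a * s ^ 2) / 2) := by
    intro v s
    have hd : ∀ t : ℝ, HasDerivAt (fun t : ℝ => f (t • ((v, s) : (Fin n → ℝ) × ℝ)))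
        (fderiv ℝ f (t • ((v, s) : (Fin n → ℝ) × ℝ)) (v, s)) t := fun t => by
      have := (hdiff (t • ((v, s) : (Fin n → ℝ) × ℝ))).hasFDerivAt.comp_hasDerivAt t (hline (v, s) t)
      exact this
    have hk : HasDerivAt (fun t : ℝ => fderiv ℝ f (t • ((v, s) : (Fin n → ℝ) × ℝ)) (v, s))
        (B (v, s) (v, s)) 0 := by
      have h1 : HasDerivAt (fun t : ℝ => fderiv ℝ f (t • ((v, s) : (Fin n → ℝ) × ℝ))) (B (v, s)) 0 :=
        hBder.comp_hasDerivAt_of_eq 0 (hline (v, s) 0) (by simp)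
      have := h1.clm_apply (hasDerivAt_const 0 ((v, s) : (Fin n → ℝ) × ℝ))
      simpa using this
    exact snd_deriv_id _ _ _ _ hd hk (by rw [zero_smul, hDf0]; rfl)
      (by rw [zero_smul]; exact hf00) (hrayo v s)
  have hBsymm : ∀ q q' : (Fin n → ℝ) × ℝ, B q q' = B q' q :=
    second_derivative_symmetric (fun y => (hdiff y).hasFDerivAt) hBder
  have hBcross : ∀ v : Fin n → ℝ, B (v, 0) ((0 : Fin n → ℝ), (1 : ℝ)) = 0 := by
    intro v
    have h11 := hBpp v 1
    have h10 := hBpp v 0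
    have h01 := hBpp 0 1
    have hsum : ((v, (1 : ℝ)) : (Fin n → ℝ) × ℝ)
        = ((v, (0 : ℝ)) : (Fin n → ℝ) × ℝ) + ((0 : Fin n → ℝ), (1 : ℝ)) := by
      simp
    rw [hsum] at h11
    simp only [map_add, ContinuousLinearMap.add_apply] at h11
    have hsym := hBsymm ((v, (0 : ℝ)) : (Fin n → ℝ) × ℝ) ((0 : Fin n → ℝ), (1 : ℝ))
    have hz : ∑ i, ((0 : Fin n → ℝ)) i ^ 2 = 0 := by simp
    rw [hz] at h01
    norm_num at h11 h10 h01
    linarith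
  -- the function φ x = ∂F/∂y (x, 0)
  set φ : (Fin n → ℝ) → ℝ :=
    fun x => fderiv ℝ f (x, 0) ((0 : Fin n → ℝ), (1 : ℝ)) with hφdef
  have hφs : ContDiff ℝ (⊤ : ℕ∞) φ := by
    have h1 : ContDiff ℝ (⊤ : ℕ∞) (fderiv ℝ f) := hFs.fderiv_right (by simp)
    have hι : ContDiff ℝ (⊤ : ℕ∞) (fun x : Fin n → ℝ => ((x, (0 : ℝ)) : (Fin n → ℝ) × ℝ)) :=
      contDiff_id.prodMk contDiff_const
    exact (h1.comp hι).clm_apply contDiff_const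
  have hφ0 : φ 0 = 0 := by
    have : ((0 : Fin n → ℝ), (0 : ℝ)) = (0 : (Fin n → ℝ) × ℝ) := rfl
    rw [hφdef]
    simp only [this, hDf0]
    rfl
  have hφd0 : fderiv ℝ φ 0 = 0 := by
    have hι : HasFDerivAt (fun x : Fin n → ℝ => ((x, (0 : ℝ)) : (Fin n → ℝ) × ℝ))
        (ContinuousLinearMap.inl ℝ (Fin n → ℝ) ℝ) 0 :=
      (ContinuousLinearMap.inl ℝ (Fin n → ℝ) ℝ).hasFDerivAt
    have h2 : HasFDerivAt (fun x : Fin n → ℝ => fderiv ℝ f (x, 0))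
        (B.comp (ContinuousLinearMap.inl ℝ (Fin n → ℝ) ℝ)) 0 :=
      HasFDerivAt.comp (g := fderiv ℝ f) (f := fun x : Fin n → ℝ => ((x, (0 : ℝ)) : (Fin n → ℝ) × ℝ))
        0 (by exact hBder) hι
    have h3 := h2.clm_apply (hasFDerivAt_const ((0 : Fin n → ℝ), (1 : ℝ)) 0)
    rw [h3.fderiv]
    apply ContinuousLinearMap.ext
    intro v
    simp only [ContinuousLinearMap.add_apply, ContinuousLinearMap.comp_apply,
      ContinuousLinearMap.flip_apply, ContinuousLinearMap.zero_apply,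
      ContinuousLinearMap.coe_comp', Function.comp_apply, ContinuousLinearMap.inl_apply]
    rw [map_zero, hBcross v, add_zero]
  -- big-O facts
  have hfO : f =O[nhds 0] fun p => ‖p‖ ^ 2 := quad_bound hFs hf00 hDf0
  have hι0 : Filter.Tendsto (fun x : Fin n → ℝ => ((x, (0 : ℝ)) : (Fin n → ℝ) × ℝ))
      (nhds 0) (nhds 0) := by
    have hc : Continuous (fun x : Fin n → ℝ => ((x, (0 : ℝ)) : (Fin n → ℝ) × ℝ)) :=
      continuous_id.prodMk continuous_const
    exact hc.tendsto' 0 0 rfl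
  have hnrm : ∀ (x : Fin n → ℝ) (m : ℕ), ‖((x, (0 : ℝ)) : (Fin n → ℝ) × ℝ)‖ ^ m = ‖x‖ ^ m := by
    intro x m
    rw [Prod.norm_def]
    simp
  have hfx0 : (fun x : Fin n → ℝ => F x 0) =O[nhds 0] fun x => ‖x‖ ^ 2 := by
    have := hfO.comp_tendsto hι0
    exact this.congr (fun x => rfl) (fun x => hnrm x 2)
  have hφO : φ =O[nhds 0] fun x => ‖x‖ ^ 2 := quad_bound hφs hφ0 hφd0
  have hRx0 : (fun x : Fin n → ℝ => R x 0) =O[nhds 0] fun x => ‖x‖ ^ 4 := by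
    have := hR.comp_tendsto hι0
    exact this.congr (fun x => rfl) (fun x => hnrm x 4)
  have hZO : (Z l) =O[nhds 0] fun x => ‖x‖ := by
    have h1 := ((hZs l).differentiable (by simp) 0).isBigO_sub
    exact (h1.norm_right).congr (fun x => by rw [hZ0 l, sub_zero]) (fun x => by rw [sub_zero])
  -- second-order Taylor bound in the y variable
  obtain ⟨K, r, hr, hK0, hKey⟩ : ∃ K r, 0 < r ∧ 0 ≤ K ∧ ∀ (x : Fin n → ℝ) (y : ℝ),
      ‖((x, y) : (Fin n → ℝ) × ℝ)‖ < r →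
      |f (x, y) - f (x, 0) - y * φ x| ≤ K * y ^ 2 := by
    set ψ : (Fin n → ℝ) × ℝ → ℝ :=
      fun p => fderiv ℝ f p ((0 : Fin n → ℝ), (1 : ℝ)) with hψdef
    have hψs : ContDiff ℝ (⊤ : ℕ∞) ψ := (hFs.fderiv_right (by simp)).clm_apply contDiff_const
    have hcont : Continuous fun p => ‖fderiv ℝ ψ p‖ := (hψs.fderiv_right (m := 1) (WithTop.coe_le_coe.2 le_top)).continuous.norm
    set K : ℝ := ‖fderiv ℝ ψ 0‖ + 1 with hKdef
    obtain ⟨r, hr, hb⟩ : ∃ r > 0, ∀ p ∈ Metric.ball (0 : (Fin n → ℝ) × ℝ) r,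
        ‖fderiv ℝ ψ p‖ ≤ K := by
      have h5 : ∀ᶠ p in nhds (0 : (Fin n → ℝ) × ℝ), ‖fderiv ℝ ψ p‖ < K := by
        have := (hcont.tendsto 0).eventually_lt_const (show ‖fderiv ℝ ψ 0‖ < K by
          rw [hKdef]; linarith)
        exact this
      rw [Metric.eventually_nhds_iff] at h5
      obtain ⟨δ, hδ, h5⟩ := h5
      exact ⟨δ, hδ, fun p hp => (h5 (by simpa [dist_eq_norm] using hp)).le⟩
    have hK0 : 0 ≤ K := le_trans (norm_nonneg _) (by rw [hKdef]; linarith)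
    refine ⟨K, r, hr, hK0, ?_⟩
    intro x y hxy
    have hu : ∀ t : ℝ, HasDerivAt (fun t : ℝ => f (x, t) - t * φ x) (ψ (x, t) - φ x) t := by
      intro t
      have hcurve : HasDerivAt (fun t : ℝ => ((x, t) : (Fin n → ℝ) × ℝ))
          ((0 : Fin n → ℝ), (1 : ℝ)) t := (hasDerivAt_const t x).prodMk (hasDerivAt_id t)
      have h6 : HasDerivAt (fun t : ℝ => f (x, t))
          (fderiv ℝ f (x, t) ((0 : Fin n → ℝ), (1 : ℝ))) t :=
        (hdiff (x, t)).hasFDerivAt.comp_hasDerivAt t hcurve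
      have := h6.sub ((hasDerivAt_id' t).mul_const (φ x))
      rw [one_mul] at this
      exact this
    have hmem : ∀ t : ℝ, |t| ≤ |y| → ((x, t) : (Fin n → ℝ) × ℝ) ∈ Metric.ball (0 : (Fin n → ℝ) × ℝ) r := by
      intro t ht
      rw [Metric.mem_ball, dist_eq_norm, sub_zero, Prod.norm_def]
      rw [Prod.norm_def] at hxy
      exact lt_of_le_of_lt (max_le_max le_rfl (by simpa using ht)) hxy
    have hψb : ∀ t : ℝ, |t| ≤ |y| → |ψ (x, t) - φ x| ≤ K * |y| := by
      intro t ht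
      have h7 : φ x = ψ (x, 0) := rfl
      rw [h7]
      have h8 : ‖ψ (x, t) - ψ (x, 0)‖ ≤ K * ‖((x, t) : (Fin n → ℝ) × ℝ) - (x, 0)‖ :=
        Convex.norm_image_sub_le_of_norm_fderiv_le
          (fun q _ => (hψs.differentiable (by simp) q)) (fun q hq => hb q hq)
          (convex_ball _ _) (hmem 0 (by simpa using abs_nonneg y)) (hmem t ht)
      have h9 : ‖((x, t) : (Fin n → ℝ) × ℝ) - (x, 0)‖ = |t| := by
        have : ((x, t) : (Fin n → ℝ) × ℝ) - (x, 0) = ((0 : Fin n → ℝ), t) := by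
          ext <;> simp
        rw [this, Prod.norm_def]
        simp
      rw [h9] at h8
      calc |ψ (x, t) - ψ (x, 0)| ≤ K * |t| := h8
        _ ≤ K * |y| := mul_le_mul_of_nonneg_left ht hK0
    -- MVT on [0, y]
    have hmvt : ‖(f (x, y) - y * φ x) - (f (x, 0) - 0 * φ x)‖ ≤ (K * |y|) * ‖y - 0‖ := by
      apply Convex.norm_image_sub_le_of_norm_fderiv_le
        (f := fun t : ℝ => f (x, t) - t * φ x) (s := Metric.closedBall (0 : ℝ) |y|)
        (fun t _ => (hu t).differentiableAt)
        (fun t htm => ?_) (convex_closedBall _ _)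
        (Metric.mem_closedBall_self (abs_nonneg y)) (by simp [Real.dist_eq, abs_nonneg])
      have htm' : |t| ≤ |y| := by simpa [Real.dist_eq] using htm
      rw [← norm_deriv_eq_norm_fderiv, (hu t).deriv]
      exact hψb t htm'
    rw [zero_mul, sub_zero, Real.norm_eq_abs, sub_zero, Real.norm_eq_abs] at hmvt
    calc |f (x, y) - f (x, 0) - y * φ x| = |f (x, y) - y * φ x - f (x, 0)| := by ring_nf
      _ ≤ K * |y| * |y| := hmvt
      _ = K * y ^ 2 := by rw [pow_two, mul_assoc, abs_mul_abs_self]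
  -- extract constants (all nonnegative)
  obtain ⟨c1', hc1'⟩ := isBigO_iff.1 hZO
  obtain ⟨c2', hc2'⟩ := isBigO_iff.1 hfx0
  obtain ⟨c3', hc3'⟩ := isBigO_iff.1 hφO
  obtain ⟨c4', hc4'⟩ := isBigO_iff.1 hRx0
  set c1 := |c1'| with hc1def
  set c2 := |c2'| with hc2def
  set c3 := |c3'| with hc3def
  set c4 := |c4'| with hc4def
  have hc1 : ∀ᶠ x in nhds (0 : Fin n → ℝ), |Z l x| ≤ c1 * ‖x‖ := by
    filter_upwards [hc1'] with x h
    simp only [Real.norm_eq_abs, abs_norm] at h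
    exact h.trans (mul_le_mul_of_nonneg_right (le_abs_self c1') (norm_nonneg x))
  have hc2 : ∀ᶠ x in nhds (0 : Fin n → ℝ), |F x 0| ≤ c2 * ‖x‖ ^ 2 := by
    filter_upwards [hc2'] with x h
    simp only [Real.norm_eq_abs, abs_norm, abs_pow] at h
    exact h.trans (mul_le_mul_of_nonneg_right (le_abs_self c2') (by positivity))
  have hc3 : ∀ᶠ x in nhds (0 : Fin n → ℝ), |φ x| ≤ c3 * ‖x‖ ^ 2 := by
    filter_upwards [hc3'] with x h
    simp only [Real.norm_eq_abs, abs_norm, abs_pow] at h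
    exact h.trans (mul_le_mul_of_nonneg_right (le_abs_self c3') (by positivity))
  have hc4 : ∀ᶠ x in nhds (0 : Fin n → ℝ), |R x 0| ≤ c4 * ‖x‖ ^ 4 := by
    filter_upwards [hc4'] with x h
    simp only [Real.norm_eq_abs, abs_norm, abs_pow] at h
    exact h.trans (mul_le_mul_of_nonneg_right (le_abs_self c4') (by positivity))
  have hc1n : 0 ≤ c1 := abs_nonneg _
  have hc2n : 0 ≤ c2 := abs_nonneg _
  have hc3n : 0 ≤ c3 := abs_nonneg _
  have hc4n : 0 ≤ c4 := abs_nonneg _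
  have hZcont : Filter.Tendsto (Z l) (nhds 0) (nhds 0) := by
    have := ((hZs l).continuous).tendsto 0
    rwa [hZ0 l] at this
  have hcurve0 : Filter.Tendsto (fun x => ((x, l * Z l x) : (Fin n → ℝ) × ℝ))
      (nhds 0) (nhds 0) := by
    have h1 : Filter.Tendsto (fun x => l * Z l x) (nhds 0) (nhds (0 : ℝ)) := by
      simpa using hZcont.const_mul l
    have h2 := Filter.Tendsto.prodMk_nhds
      (Filter.tendsto_id (α := Fin n → ℝ) (x := nhds 0)) h1
    exact h2
  have evsmall : ∀ᶠ x in nhds (0 : Fin n → ℝ), ‖((x, l * Z l x) : (Fin n → ℝ) × ℝ)‖ < r := by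
    have h1 := hcurve0.norm
    rw [norm_zero] at h1
    exact h1.eventually_lt_const hr
  have evone : ∀ᶠ x in nhds (0 : Fin n → ℝ), ‖x‖ ≤ 1 := by
    have h1 := (continuous_norm (E := Fin n → ℝ)).tendsto 0
    rw [norm_zero] at h1
    exact h1.eventually_le_const (by norm_num)
  -- pointwise splitting of the implicit equation
  have hsplit : ∀ᶠ x in nhds (0 : Fin n → ℝ),
      Z l x = (f (x, l * Z l x) - f (x, 0) - (l * Z l x) * φ x)
        + (l * Z l x) * φ x + F x 0 := by
    filter_upwards [hZ l] with x e0
    have h1 : f (x, l * Z l x) = F x (l * Z l x) := rfl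
    have h2 : f (x, (0 : ℝ)) = F x 0 := rfl
    rw [h1, h2, ← e0]
    ring
  -- first bootstrap : |Z l x| ≤ c5 * ‖x‖ ^ 2 eventually
  set c5 : ℝ := c2 + K * l ^ 2 * c1 ^ 2 + |l| * c1 * c3 with hc5def
  have hc5n : 0 ≤ c5 := by
    rw [hc5def]
    have h1 : 0 ≤ K * l ^ 2 * c1 ^ 2 := mul_nonneg (mul_nonneg hK0 (sq_nonneg l)) (sq_nonneg c1)
    have h2 : 0 ≤ |l| * c1 * c3 := mul_nonneg (mul_nonneg (abs_nonneg l) hc1n) hc3n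
    linarith
  have hZ2 : ∀ᶠ x in nhds (0 : Fin n → ℝ), |Z l x| ≤ c5 * ‖x‖ ^ 2 := by
    filter_upwards [hsplit, hc1, hc2, hc3, evsmall, evone] with x e0 e1 e2 e3 e4 e5
    have key := hKey x (l * Z l x) e4
    have h1 : |Z l x| ≤ K * (l * Z l x) ^ 2 + |l * Z l x| * |φ x| + |F x 0| := by
      conv_lhs => rw [e0]
      refine le_trans (abs_add_le _ _) ?_
      refine add_le_add_left (le_trans (abs_add_le _ _) ?_) _
      rw [abs_mul]
      exact add_le_add_left key _
    have ht1 : K * (l * Z l x) ^ 2 ≤ K * l ^ 2 * (c1 * ‖x‖) ^ 2 := by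
      have h3 : (Z l x) ^ 2 ≤ (c1 * ‖x‖) ^ 2 := by
        rw [← sq_abs]
        exact pow_le_pow_left₀ (abs_nonneg _) e1 2
      calc K * (l * Z l x) ^ 2 = K * l ^ 2 * (Z l x) ^ 2 := by ring
        _ ≤ K * l ^ 2 * (c1 * ‖x‖) ^ 2 :=
            mul_le_mul_of_nonneg_left h3 (mul_nonneg hK0 (sq_nonneg l))
    have ht2 : |l * Z l x| * |φ x| ≤ |l| * (c1 * ‖x‖) * (c3 * ‖x‖ ^ 2) := by
      rw [abs_mul]
      have h5 : |Z l x| * |φ x| ≤ (c1 * ‖x‖) * (c3 * ‖x‖ ^ 2) :=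
        mul_le_mul e1 e3 (abs_nonneg _) (le_trans (abs_nonneg _) e1)
      calc |l| * |Z l x| * |φ x| = |l| * (|Z l x| * |φ x|) := by ring
        _ ≤ |l| * ((c1 * ‖x‖) * (c3 * ‖x‖ ^ 2)) :=
            mul_le_mul_of_nonneg_left h5 (abs_nonneg l)
        _ = |l| * (c1 * ‖x‖) * (c3 * ‖x‖ ^ 2) := by ring
    have h4 : ‖x‖ ^ 3 ≤ ‖x‖ ^ 2 := pow_le_pow_of_le_one (norm_nonneg x) e5 (by norm_num)
    calc |Z l x| ≤ K * (l * Z l x) ^ 2 + |l * Z l x| * |φ x| + |F x 0| := h1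
      _ ≤ K * l ^ 2 * (c1 * ‖x‖) ^ 2 + |l| * (c1 * ‖x‖) * (c3 * ‖x‖ ^ 2) + c2 * ‖x‖ ^ 2 := by
          linarith
      _ = K * l ^ 2 * c1 ^ 2 * ‖x‖ ^ 2 + (|l| * c1 * c3) * ‖x‖ ^ 3 + c2 * ‖x‖ ^ 2 := by ring
      _ ≤ c5 * ‖x‖ ^ 2 := by
          rw [hc5def]
          have := mul_le_mul_of_nonneg_left h4 (by positivity : (0:ℝ) ≤ |l| * c1 * c3)
          linarith
  -- final estimate
  rw [isBigO_iff]
  refine ⟨K * l ^ 2 * c5 ^ 2 + |l| * c5 * c3 + c4, ?_⟩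
  filter_upwards [hsplit, hZ2, hc3, hc4, evsmall] with x e0 e1 e3 e4 e5
  have key := hKey x (l * Z l x) e5
  have hgoal : (∑ i, x i ^ 2) / 2 + P3 x = F x 0 - R x 0 := by
    rw [hF]
    ring
  have h1 : |Z l x - ((∑ i, x i ^ 2) / 2 + P3 x)|
      ≤ K * (l * Z l x) ^ 2 + |l * Z l x| * |φ x| + |R x 0| := by
    conv_lhs => rw [hgoal, e0]
    have h2 : f (x, l * Z l x) - f (x, 0) - l * Z l x * φ x + l * Z l x * φ x + F x 0
        - (F x 0 - R x 0)
        = (f (x, l * Z l x) - f (x, 0) - l * Z l x * φ x) + l * Z l x * φ x + R x 0 := by ring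
    rw [h2]
    refine le_trans (abs_add_le _ _) ?_
    refine add_le_add_left (le_trans (abs_add_le _ _) ?_) _
    rw [abs_mul]
    exact add_le_add_left key _
  have ht1 : K * (l * Z l x) ^ 2 ≤ K * l ^ 2 * c5 ^ 2 * ‖x‖ ^ 4 := by
    have h3 : (Z l x) ^ 2 ≤ (c5 * ‖x‖ ^ 2) ^ 2 := by
      rw [← sq_abs]
      exact pow_le_pow_left₀ (abs_nonneg _) e1 2
    calc K * (l * Z l x) ^ 2 = K * l ^ 2 * (Z l x) ^ 2 := by ring
      _ ≤ K * l ^ 2 * (c5 * ‖x‖ ^ 2) ^ 2 :=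
          mul_le_mul_of_nonneg_left h3 (mul_nonneg hK0 (sq_nonneg l))
      _ = K * l ^ 2 * c5 ^ 2 * ‖x‖ ^ 4 := by ring
  have ht2 : |l * Z l x| * |φ x| ≤ |l| * c5 * c3 * ‖x‖ ^ 4 := by
    rw [abs_mul]
    have h5 : |Z l x| * |φ x| ≤ (c5 * ‖x‖ ^ 2) * (c3 * ‖x‖ ^ 2) :=
      mul_le_mul e1 e3 (abs_nonneg _) (le_trans (abs_nonneg _) e1)
    calc |l| * |Z l x| * |φ x| = |l| * (|Z l x| * |φ x|) := by ring
      _ ≤ |l| * ((c5 * ‖x‖ ^ 2) * (c3 * ‖x‖ ^ 2)) :=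
          mul_le_mul_of_nonneg_left h5 (abs_nonneg l)
      _ = |l| * c5 * c3 * ‖x‖ ^ 4 := by ring
  have hfin : |Z l x - ((∑ i, x i ^ 2) / 2 + P3 x)|
      ≤ (K * l ^ 2 * c5 ^ 2 + |l| * c5 * c3 + c4) * ‖x‖ ^ 4 := by
    calc |Z l x - ((∑ i, x i ^ 2) / 2 + P3 x)|
        ≤ K * (l * Z l x) ^ 2 + |l * Z l x| * |φ x| + |R x 0| := h1
      _ ≤ K * l ^ 2 * c5 ^ 2 * ‖x‖ ^ 4 + |l| * c5 * c3 * ‖x‖ ^ 4 + c4 * ‖x‖ ^ 4 := by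
          linarith
      _ = (K * l ^ 2 * c5 ^ 2 + |l| * c5 * c3 + c4) * ‖x‖ ^ 4 := by ring
  simpa [Real.norm_eq_abs, abs_pow, abs_of_nonneg (norm_nonneg x)] using hfin
end

section
/- Let S ⊂ ℝ^{n+1} be a non-degenerate hypersurface, p₀ ∈ S, ζ a transversal vector field along S such that D_Xζ is tangent to S at p₀ for every tangent field X. Write ζ = Σₗ aₗXₗ + δζ̃ where ζ̃ is the Blaschke affine normal and {X₁,...,Xₙ} is an orthonormal frame for the metric h induced by ζ. Then the cubic form C of the pair (induced connection, h) is apolar at p₀ (i.e., Σᵢ C(X_k, Xᵢ, Xᵢ) = 0 for all k) if and only if aₖ(p₀) = 0 for all k, i.e., if and only if ζ(p₀) is a scalar multiple of the Blaschke normal ζ̃(p₀). -/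
set_option maxHeartbeats 1000000


/-- Apolarity characterizes the Blaschke normal direction: for a transversal field
`ζ = Σ aₗXₗ + δζ̃` with `D_Xζ` tangent at `p₀`, the cubic form `C` of `(∇, h)` is apolar
at `p₀` iff `a(p₀) = 0`, iff `ζ(p₀)` is a multiple of the Blaschke normal `ζ̃(p₀)`. -/
theorem stmt_15 {n : ℕ}
    (φ ζ ζt : (Fin n → ℝ) → (Fin (n+1) → ℝ))
    (h ht : (Fin n → ℝ) → (Fin n → ℝ) →L[ℝ] (Fin n → ℝ) →L[ℝ] ℝ)
    (Γ Γt : (Fin n → ℝ) → (Fin n → ℝ) →L[ℝ] (Fin n → ℝ) →L[ℝ] (Fin n → ℝ))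
    (X : Fin n → (Fin n → ℝ) → (Fin n → ℝ))
    (aa : (Fin n → ℝ) → (Fin n → ℝ)) (δ : (Fin n → ℝ) → ℝ) (p₀ : Fin n → ℝ)
    (hφ : ContDiff ℝ (⊤ : ℕ∞) φ) (hζ : ContDiff ℝ (⊤ : ℕ∞) ζ) (hζt : ContDiff ℝ (⊤ : ℕ∞) ζt)
    (hhs : ContDiff ℝ (⊤ : ℕ∞) h) (hhts : ContDiff ℝ (⊤ : ℕ∞) ht)
    (haa : ContDiff ℝ (⊤ : ℕ∞) aa) (hδs : ContDiff ℝ (⊤ : ℕ∞) δ)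
    (himm : ∀ p, Function.Injective (fderiv ℝ φ p))
    (htrans : ∀ p, ζt p ∉ Set.range ⇑(fderiv ℝ φ p))
    (hδ : ∀ p, δ p ≠ 0)
    (hGauss : ∀ p v w, fderiv ℝ (fun q => fderiv ℝ φ q w) p v
      = fderiv ℝ φ p (Γ p v w) + (h p v w) • ζ p)
    (hGausst : ∀ p v w, fderiv ℝ (fun q => fderiv ℝ φ q w) p v
      = fderiv ℝ φ p (Γt p v w) + (ht p v w) • ζt p)
    (hframe : ∀ p i j, h p (X i p) (X j p) = if i = j then 1 else 0)
    (hspan : ∀ p, Submodule.span ℝ (Set.range fun i => X i p) = ⊤)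
    (hζdef : ∀ p, ζ p = fderiv ℝ φ p (aa p) + δ p • ζt p)
    (hζttan : ∀ p v, fderiv ℝ ζt p v ∈ Set.range ⇑(fderiv ℝ φ p))
    (hapolar : ∀ p v, ∑ i,
      ((fderiv ℝ ht p v) (X i p) (X i p) - ht p (Γt p v (X i p)) (X i p)
        - ht p (X i p) (Γt p v (X i p))) = 0)
    (hζtan0 : ∀ v, fderiv ℝ ζ p₀ v ∈ Set.range ⇑(fderiv ℝ φ p₀)) :
    ((∀ k, (∑ i,
      ((fderiv ℝ h p₀ (X k p₀)) (X i p₀) (X i p₀)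
        - h p₀ (Γ p₀ (X k p₀) (X i p₀)) (X i p₀)
        - h p₀ (X i p₀) (Γ p₀ (X k p₀) (X i p₀)))) = 0) ↔ aa p₀ = 0) ∧
    (aa p₀ = 0 ↔ ∃ c : ℝ, ζ p₀ = c • ζt p₀) := by
  -- transversality decomposition lemma
  have key : ∀ p (u : Fin n → ℝ) (c : ℝ),
      fderiv ℝ φ p u + c • ζt p = 0 → u = 0 ∧ c = 0 := by
    intro p u c hc
    have hc0 : c = 0 := by
      by_contra hcne
      apply htrans p
      refine ⟨(-c⁻¹) • u, ?_⟩
      have h1 : fderiv ℝ φ p u = -(c • ζt p) := eq_neg_of_add_eq_zero_left hc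
      rw [map_smul, h1, smul_neg, neg_smul, neg_neg, smul_smul,
        inv_mul_cancel₀ hcne, one_smul]
    subst hc0
    rw [zero_smul, add_zero] at hc
    refine ⟨himm p ?_, rfl⟩
    rw [hc, map_zero]
  -- relations between (h, Γ) and (ht, Γt)
  have hrel : ∀ p v w, ht p v w = δ p * h p v w
      ∧ Γt p v w = Γ p v w + h p v w • aa p := by
    intro p v w
    have e := (hGauss p v w).symm.trans (hGausst p v w)
    rw [hζdef p] at e
    have e2 : fderiv ℝ φ p (Γ p v w + h p v w • aa p - Γt p v w)
        + (h p v w * δ p - ht p v w) • ζt p = 0 := by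
      rw [map_sub, map_add, map_smul]
      linear_combination (norm := module) e
    obtain ⟨hu, hc⟩ := key p _ _ e2
    refine ⟨by linear_combination -hc, ?_⟩
    linear_combination (norm := module) -hu
  have hht : ∀ p v w, ht p v w = δ p * h p v w := fun p v w => (hrel p v w).1
  have hΓt : ∀ p (v w : Fin n → ℝ), Γt p v w = Γ p v w + h p v w • aa p :=
    fun p v w => (hrel p v w).2
  -- differentiability facts
  have hφ' : ContDiff ℝ (⊤ : ℕ∞) (fderiv ℝ φ) := hφ.fderiv_right (by simp)
  have hφ'd := hφ'.differentiable (by simp)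
  have haad := haa.differentiable (by simp)
  have hδd := hδs.differentiable (by simp)
  have hζtd := hζt.differentiable (by simp)
  have hhd := hhs.differentiable (by simp)
  -- second derivative evaluation
  have hsecond : ∀ p (v w : Fin n → ℝ),
      (fderiv ℝ (fderiv ℝ φ) p v) w = fderiv ℝ (fun q => fderiv ℝ φ q w) p v := by
    intro p v w
    rw [fderiv_clm_apply (hφ'd p) (differentiableAt_const w)]
    simp
  -- derivative of δ at p₀
  have hδ' : ∀ v, fderiv ℝ δ p₀ v = -(δ p₀ * h p₀ v (aa p₀)) := by
    intro v
    obtain ⟨u, hu⟩ := hζtan0 v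
    obtain ⟨u', hu'⟩ := hζttan p₀ v
    have hAd : DifferentiableAt ℝ (fun q => fderiv ℝ φ q (aa q)) p₀ :=
      (hφ'd p₀).clm_apply (haad p₀)
    have hζeq : ζ = fun q => fderiv ℝ φ q (aa q) + δ q • ζt q := funext hζdef
    have hd1 : fderiv ℝ ζ p₀ v
        = fderiv ℝ (fun q => fderiv ℝ φ q (aa q)) p₀ v
          + (fderiv ℝ δ p₀ v • ζt p₀ + δ p₀ • fderiv ℝ ζt p₀ v) := by
      rw [hζeq, fderiv_fun_add (g := fun q => δ q • ζt q) hAd ((hδd p₀).smul (hζtd p₀))]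
      rw [fderiv_fun_smul (hδd p₀) (hζtd p₀)]
      simp only [ContinuousLinearMap.add_apply, ContinuousLinearMap.smul_apply,
        ContinuousLinearMap.smulRight_apply]
      module
    have hd2 : fderiv ℝ (fun q => fderiv ℝ φ q (aa q)) p₀ v
        = fderiv ℝ φ p₀ (fderiv ℝ aa p₀ v) + (fderiv ℝ φ p₀ (Γ p₀ v (aa p₀))
          + h p₀ v (aa p₀) • ζ p₀) := by
      rw [fderiv_clm_apply (hφ'd p₀) (haad p₀)]
      simp only [ContinuousLinearMap.add_apply, ContinuousLinearMap.comp_apply,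
        ContinuousLinearMap.flip_apply]
      rw [hsecond p₀ v (aa p₀), hGauss p₀ v (aa p₀)]
    have e0 : fderiv ℝ φ p₀ (fderiv ℝ aa p₀ v + Γ p₀ v (aa p₀)
          + h p₀ v (aa p₀) • aa p₀ + δ p₀ • u' - u)
        + (h p₀ v (aa p₀) * δ p₀ + fderiv ℝ δ p₀ v) • ζt p₀ = 0 := by
      have := hd1
      rw [hd2, hζdef p₀] at this
      simp only [map_sub, map_add, map_smul, hu, hu']
      linear_combination (norm := module) -this
    obtain ⟨_, hc⟩ := key p₀ _ _ e0
    linear_combination hc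
  -- ht as a function
  have htfun : ht = fun p => δ p • h p := by
    funext p
    refine ContinuousLinearMap.ext fun v => ContinuousLinearMap.ext fun w => ?_
    rw [hht p v w]
    rfl
  have hdht : ∀ (v w z : Fin n → ℝ), fderiv ℝ ht p₀ v w z
      = δ p₀ * fderiv ℝ h p₀ v w z + fderiv ℝ δ p₀ v * h p₀ w z := by
    intro v w z
    haveI : IsBoundedSMul ℝ ((Fin n → ℝ) →L[ℝ] (Fin n → ℝ) →L[ℝ] ℝ) :=
      ContinuousLinearMap.toNormedSpace.toIsBoundedSMul
    rw [htfun, fderiv_fun_smul (hδd p₀) (hhd p₀)]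
    simp [ContinuousLinearMap.smulRight_apply, ContinuousLinearMap.add_apply]
  -- frame expansion at p₀
  have hexp : ∀ u : Fin n → ℝ, (∑ i, h p₀ u (X i p₀) • X i p₀) = u := by
    have : (LinearMap.mk (AddHom.mk (fun u => ∑ i, h p₀ u (X i p₀) • X i p₀)
        (by intro x y; simp [map_add, ContinuousLinearMap.add_apply, add_smul,
          Finset.sum_add_distrib]))
        (by intro c x; simp [smul_smul, Finset.smul_sum]) : (Fin n → ℝ) →ₗ[ℝ] (Fin n → ℝ))
        = LinearMap.id := by
      apply LinearMap.ext_on (hspan p₀)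
      rintro x ⟨j, rfl⟩
      simp only [LinearMap.coe_mk, AddHom.coe_mk, LinearMap.id_coe, id_eq]
      rw [Finset.sum_congr rfl (fun i _ => by rw [hframe p₀ j i])]
      simp
    intro u
    exact congrFun (congrArg (fun f => f.toFun) this) u
  have hsymmX : ∀ (u : Fin n → ℝ) k, h p₀ (X k p₀) u = h p₀ u (X k p₀) := by
    intro u k
    conv_lhs => rw [← hexp u]
    rw [map_sum]
    rw [Finset.sum_congr rfl (fun i _ => by
      rw [map_smul, smul_eq_mul, hframe p₀ k i])]
    simp
  -- main identity
  have hmain : ∀ k, (∑ i,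
      ((fderiv ℝ h p₀ (X k p₀)) (X i p₀) (X i p₀)
        - h p₀ (Γ p₀ (X k p₀) (X i p₀)) (X i p₀)
        - h p₀ (X i p₀) (Γ p₀ (X k p₀) (X i p₀))))
      = (n + 2) * h p₀ (aa p₀) (X k p₀) := by
    intro k
    have hap := hapolar p₀ (X k p₀)
    have hterm : ∀ i, (fderiv ℝ ht p₀ (X k p₀)) (X i p₀) (X i p₀)
        - ht p₀ (Γt p₀ (X k p₀) (X i p₀)) (X i p₀)
        - ht p₀ (X i p₀) (Γt p₀ (X k p₀) (X i p₀))
        = δ p₀ * ((fderiv ℝ h p₀ (X k p₀)) (X i p₀) (X i p₀)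
            - h p₀ (Γ p₀ (X k p₀) (X i p₀)) (X i p₀)
            - h p₀ (X i p₀) (Γ p₀ (X k p₀) (X i p₀)))
          - δ p₀ * h p₀ (aa p₀) (X k p₀)
          - 2 * (δ p₀ * ((if k = i then (1:ℝ) else 0) * h p₀ (aa p₀) (X i p₀))) := by
      intro i
      simp only [hdht, hht, hΓt, hδ', map_add, map_smul,
        ContinuousLinearMap.add_apply, ContinuousLinearMap.smul_apply,
        smul_eq_mul, hframe p₀ i i, hframe p₀ k i,
        hsymmX (aa p₀) i, hsymmX (aa p₀) k, if_true, ite_true]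
      ring
    rw [Finset.sum_congr rfl (fun i _ => hterm i)] at hap
    rw [Finset.sum_sub_distrib, Finset.sum_sub_distrib] at hap
    rw [← Finset.mul_sum, ← Finset.mul_sum, Finset.sum_const, Finset.card_univ,
      Fintype.card_fin, nsmul_eq_mul] at hap
    have hsum2 : (∑ x, 2 * (δ p₀ * ((if k = x then (1:ℝ) else 0)
          * h p₀ (aa p₀) (X x p₀))))
        = 2 * (δ p₀ * h p₀ (aa p₀) (X k p₀)) := by
      rw [Finset.sum_eq_single k]
      · simp
      · intro b _ hb; simp [Ne.symm hb]
      · simp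
    rw [hsum2] at hap
    have h2 : δ p₀ * ((∑ i,
      ((fderiv ℝ h p₀ (X k p₀)) (X i p₀) (X i p₀)
        - h p₀ (Γ p₀ (X k p₀) (X i p₀)) (X i p₀)
        - h p₀ (X i p₀) (Γ p₀ (X k p₀) (X i p₀))))
        - (n + 2) * h p₀ (aa p₀) (X k p₀)) = 0 := by linear_combination hap
    have h3 := (mul_eq_zero.mp h2).resolve_left (hδ p₀)
    linarith
  -- conclusion
  have hiff1 : (∀ k, h p₀ (aa p₀) (X k p₀) = 0) ↔ aa p₀ = 0 := by
    constructor
    · intro hk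
      rw [← hexp (aa p₀)]
      rw [Finset.sum_congr rfl (fun i _ => by rw [hk i, zero_smul])]
      simp
    · intro h0 k
      rw [h0]
      simp
  constructor
  · constructor
    · intro hk
      apply hiff1.mp
      intro k
      have := (hmain k).symm.trans (hk k)
      have hn : ((n:ℝ) + 2) ≠ 0 := by positivity
      exact (mul_eq_zero.mp this).resolve_left hn
    · intro h0 k
      rw [hmain k, hiff1.mpr h0 k, mul_zero]
  · constructor
    · intro h0
      refine ⟨δ p₀, ?_⟩
      rw [hζdef p₀, h0, map_zero, zero_add]
    · rintro ⟨c, hc⟩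
      have e0 : fderiv ℝ φ p₀ (aa p₀) + (δ p₀ - c) • ζt p₀ = 0 := by
        have h1 := hζdef p₀
        rw [hc] at h1
        linear_combination (norm := module) -h1
      exact (key p₀ _ _ e0).1
end
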